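/- arXiv:1401.4220 — 11 statements merged into one kernel-verified Lean document; each statement's English description precedes it below -/
import Mathlib

section
/- Let A ∈ ℝ^{m×n}, σ = ‖A‖² (the square of the operator 2-norm), and let v ∈ ℝⁿ with ‖v‖ = 1 not be a dominant right singular vector of A (i.e., ‖Av‖² < σ). Define u = (σv − AᵀAv)/√(σ − ‖Av‖²). Then H = σI − uuᵀ satisfies vᵀ(H − AᵀA)v = 0 and H ⪰ AᵀA. -/
/-!
Put `C = σ • 1 - AᵀA`, which is positive semidefinite because `σ = ‖A‖²` bounds `‖Ax‖² / ‖x‖²`.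
Since `vᵀCv = σ - ‖Av‖²` and `Cv = σv - AᵀAv`, we get `uuᵀ = (Cv)(Cv)ᵀ / vᵀCv`, so `H - AᵀA` is
Wedderburn's rank-one reduction of `C` along `v`. This reduction annihilates the quadratic form
at `v`, and its quadratic form `xᵀCx - (vᵀCx)² / vᵀCv` is nonnegative by the Cauchy–Schwarz
inequality for the semi-inner product `(x, y) ↦ xᵀCy`.
-/

open Matrix

/-- The operator 2-norm of a real matrix. -/
noncomputable def matOpNorm {m n : ℕ} (A : Matrix (Fin m) (Fin n) ℝ) : ℝ :=
  ‖(Matrix.toEuclideanLin A).toContinuousLinearMap‖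

lemma EuclideanSpace.norm_toLp_sq {ι : Type*} [Fintype ι] (y : ι → ℝ) :
    ‖WithLp.toLp 2 y‖ ^ 2 = y ⬝ᵥ y := by
  rw [← real_inner_self_eq_norm_sq, EuclideanSpace.inner_toLp_toLp, star_trivial]

lemma dotProduct_mulVec_self_le_matOpNorm_sq {m n : ℕ} (A : Matrix (Fin m) (Fin n) ℝ)
    (x : Fin n → ℝ) : A *ᵥ x ⬝ᵥ A *ᵥ x ≤ matOpNorm A ^ 2 * (x ⬝ᵥ x) := by
  have h := pow_le_pow_left₀ (norm_nonneg _)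
    ((Matrix.toEuclideanLin A).toContinuousLinearMap.le_opNorm (WithLp.toLp 2 x)) 2
  rw [mul_pow, EuclideanSpace.norm_toLp_sq, EuclideanSpace.norm_toLp_sq] at h
  exact h

lemma Matrix.dotProduct_transpose_mul_self_mulVec {R : Type*} [CommSemiring R] {m n : Type*}
    [Fintype m] [Fintype n] (A : Matrix m n R) (x : n → R) :
    x ⬝ᵥ (Aᵀ * A) *ᵥ x = A *ᵥ x ⬝ᵥ A *ᵥ x := by
  rw [← mulVec_mulVec, dotProduct_mulVec, vecMul_transpose]

lemma posSemidef_matOpNorm_sq_smul_one_sub {m n : ℕ} (A : Matrix (Fin m) (Fin n) ℝ) :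
    (matOpNorm A ^ 2 • (1 : Matrix (Fin n) (Fin n) ℝ) - Aᵀ * A).PosSemidef := by
  refine .of_dotProduct_mulVec_nonneg ?_ fun x ↦ ?_
  · exact isHermitian_iff_isSymm.mpr ((isSymm_one.smul _).sub (by simp [IsSymm, transpose_mul]))
  · have := dotProduct_mulVec_self_le_matOpNorm_sq A x
    simp only [star_trivial, sub_mulVec, smul_mulVec, one_mulVec, dotProduct_sub,
      dotProduct_smul, smul_eq_mul, dotProduct_transpose_mul_self_mulVec]
    linarith

namespace Matrix

variable {ι : Type*} [Fintype ι]

lemma IsSymm.dotProduct_mulVec_comm {C : Matrix ι ι ℝ} (hC : C.IsSymm) (x y : ι → ℝ) :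
    x ⬝ᵥ C *ᵥ y = y ⬝ᵥ C *ᵥ x := by
  rw [dotProduct_mulVec, ← mulVec_transpose, hC.eq, dotProduct_comm]

lemma PosSemidef.dotProduct_mulVec_sq_le {C : Matrix ι ι ℝ} (hC : C.PosSemidef) (v x : ι → ℝ) :
    (v ⬝ᵥ C *ᵥ x) ^ 2 ≤ (v ⬝ᵥ C *ᵥ v) * (x ⬝ᵥ C *ᵥ x) := by
  have hsymm := (isHermitian_iff_isSymm.mp hC.isHermitian).dotProduct_mulVec_comm
  have hquad (t : ℝ) : 0 ≤ (v ⬝ᵥ C *ᵥ v) * (t * t) + 2 * (v ⬝ᵥ C *ᵥ x) * t + x ⬝ᵥ C *ᵥ x := by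
    have h := hC.dotProduct_mulVec_nonneg (t • v + x)
    simp only [star_trivial, mulVec_add, mulVec_smul, add_dotProduct, dotProduct_add,
      smul_dotProduct, dotProduct_smul, smul_eq_mul, hsymm x v] at h
    linarith
  have := discrim_le_zero hquad
  rw [discrim] at this
  nlinarith

/-- Wedderburn's rank-one reduction `C - (Cv)(Cv)ᵀ / vᵀCv`; since `0⁻¹ = 0`, it is `C` itself
when `vᵀCv = 0`. -/
noncomputable def wedderburnReduction (C : Matrix ι ι ℝ) (v : ι → ℝ) : Matrix ι ι ℝ :=
  C - (v ⬝ᵥ C *ᵥ v)⁻¹ • vecMulVec (C *ᵥ v) (C *ᵥ v)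

lemma dotProduct_wedderburnReduction_mulVec (C : Matrix ι ι ℝ) (v x : ι → ℝ) :
    x ⬝ᵥ C.wedderburnReduction v *ᵥ x = x ⬝ᵥ C *ᵥ x - (v ⬝ᵥ C *ᵥ v)⁻¹ * (C *ᵥ v ⬝ᵥ x) ^ 2 := by
  simp only [wedderburnReduction, sub_mulVec, smul_mulVec, vecMulVec_mulVec, op_smul_eq_mul,
    dotProduct_sub, dotProduct_smul, smul_eq_mul, dotProduct_comm x (C *ᵥ v)]
  ring

lemma dotProduct_wedderburnReduction_mulVec_self (C : Matrix ι ι ℝ) (v : ι → ℝ) :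
    v ⬝ᵥ C.wedderburnReduction v *ᵥ v = 0 := by
  rw [dotProduct_wedderburnReduction_mulVec, dotProduct_comm (C *ᵥ v), sq, ← mul_assoc,
    inv_mul_mul_self, sub_self]

lemma PosSemidef.wedderburnReduction {C : Matrix ι ι ℝ} (hC : C.PosSemidef) (v : ι → ℝ) :
    (C.wedderburnReduction v).PosSemidef := by
  have hsymm := isHermitian_iff_isSymm.mp hC.isHermitian
  refine .of_dotProduct_mulVec_nonneg ?_ fun x ↦ ?_
  · refine isHermitian_iff_isSymm.mpr (hsymm.sub (IsSymm.smul ?_ _))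
    simp [IsSymm, transpose_vecMulVec]
  · rw [star_trivial, dotProduct_wedderburnReduction_mulVec, sub_nonneg, dotProduct_comm (C *ᵥ v),
      hsymm.dotProduct_mulVec_comm x v]
    simpa using inv_mul_le_of_le_mul₀ (hC.dotProduct_mulVec_nonneg v)
      (hC.dotProduct_mulVec_nonneg x) (hC.dotProduct_mulVec_sq_le v x)

end Matrix

theorem imro1d_sigma_u_general {m n : ℕ} (A : Matrix (Fin m) (Fin n) ℝ)
    (v : Fin n → ℝ) (hv : v ⬝ᵥ v = 1) :
    let σ : ℝ := (matOpNorm A)^2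
    let u : Fin n → ℝ :=
      (Real.sqrt (σ - (A.mulVec v) ⬝ᵥ (A.mulVec v)))⁻¹ •
        (σ • v - (Aᵀ * A).mulVec v)
    let H : Matrix (Fin n) (Fin n) ℝ := σ • (1 : Matrix (Fin n) (Fin n) ℝ) - vecMulVec u u
    v ⬝ᵥ ((H - Aᵀ * A).mulVec v) = 0 ∧ (H - Aᵀ * A).PosSemidef := by
  intro σ u H
  set C := σ • (1 : Matrix (Fin n) (Fin n) ℝ) - Aᵀ * A
  have hC : C.PosSemidef := posSemidef_matOpNorm_sq_smul_one_sub A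
  have hCv : C *ᵥ v = σ • v - (Aᵀ * A) *ᵥ v := by
    simp only [C, sub_mulVec, smul_mulVec, one_mulVec]
  have hvCv : v ⬝ᵥ C *ᵥ v = σ - A *ᵥ v ⬝ᵥ A *ᵥ v := by
    rw [hCv, dotProduct_sub, dotProduct_smul, hv, smul_eq_mul, mul_one,
      dotProduct_transpose_mul_self_mulVec]
  have hu : vecMulVec u u = (v ⬝ᵥ C *ᵥ v)⁻¹ • vecMulVec (C *ᵥ v) (C *ᵥ v) := by
    rw [smul_vecMulVec, vecMulVec_smul, smul_smul, ← mul_inv, Real.mul_self_sqrt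
      (hvCv ▸ hC.dotProduct_mulVec_nonneg v), hvCv, hCv]
  have hH : H - Aᵀ * A = C.wedderburnReduction v := by
    rw [wedderburnReduction, ← hu]
    exact sub_right_comm _ _ _
  rw [hH]
  exact ⟨dotProduct_wedderburnReduction_mulVec_self C v, hC.wedderburnReduction v⟩

/-- IMRO-1D: with `σ = ‖A‖²`, `v` a unit vector with `‖Av‖² < σ`, and
`u = (σv − AᵀAv)/√(σ − ‖Av‖²)`, the matrix `H = σI − uuᵀ` satisfies
`vᵀ(H − AᵀA)v = 0` and `H ⪰ AᵀA`. -/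
theorem imro1d_sigma_u {m n : ℕ} (A : Matrix (Fin m) (Fin n) ℝ)
    (v : Fin n → ℝ) (hv : v ⬝ᵥ v = 1)
    (hdom : (A.mulVec v) ⬝ᵥ (A.mulVec v) < (matOpNorm A)^2) :
    let σ : ℝ := (matOpNorm A)^2
    let u : Fin n → ℝ :=
      (Real.sqrt (σ - (A.mulVec v) ⬝ᵥ (A.mulVec v)))⁻¹ •
        (σ • v - (Aᵀ * A).mulVec v)
    let H : Matrix (Fin n) (Fin n) ℝ := σ • (1 : Matrix (Fin n) (Fin n) ℝ) - vecMulVec u u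
    v ⬝ᵥ ((H - Aᵀ * A).mulVec v) = 0 ∧ (H - Aᵀ * A).PosSemidef :=
  imro1d_sigma_u_general A v hv
end

section
/- Let A ∈ ℝ^{m×n}, σ = ‖A‖², v a unit vector with ‖Av‖² < σ, and u = (σv − AᵀAv)/√(σ − ‖Av‖²). Then the operator norm of the stacked matrix (A; uᵀ) ∈ ℝ^{(m+1)×n} equals ‖A‖. -/
/-!
With `σ = ‖A‖²` the form `q(x, y) = σ ⟪x, y⟫ - ⟪A x, A y⟫` (`gapForm A σ`) is positive
semidefinite, and for the unit vector `v` the new row satisfies `⟪u, x⟫ = q(v, x) / √(q(v, v))`.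
Cauchy–Schwarz for `q` gives `⟪u, x⟫² ≤ q(x, x)`, i.e. `‖A x‖² + ⟪u, x⟫² ≤ σ ‖x‖²`, so appending
the row `uᵀ` does not increase the operator norm; appending a row never decreases it.
-/

open Matrix

section matOpNorm

variable {m n : ℕ}

lemma matOpNorm_nonneg (A : Matrix (Fin m) (Fin n) ℝ) : 0 ≤ matOpNorm A := norm_nonneg _

lemma dotProduct_mulVec_self_le (A : Matrix (Fin m) (Fin n) ℝ) (x : Fin n → ℝ) :
    (A *ᵥ x) ⬝ᵥ (A *ᵥ x) ≤ matOpNorm A ^ 2 * (x ⬝ᵥ x) := by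
  have h := (toEuclideanLin A).toContinuousLinearMap.le_opNorm (WithLp.toLp 2 x)
  rw [← EuclideanSpace.norm_toLp_sq, ← EuclideanSpace.norm_toLp_sq, ← mul_pow]
  exact pow_le_pow_left₀ (norm_nonneg _) h 2

lemma matOpNorm_le_of_forall_dotProduct_le {A : Matrix (Fin m) (Fin n) ℝ} {c : ℝ} (hc : 0 ≤ c)
    (h : ∀ x, (A *ᵥ x) ⬝ᵥ (A *ᵥ x) ≤ c ^ 2 * (x ⬝ᵥ x)) : matOpNorm A ≤ c := by
  refine ContinuousLinearMap.opNorm_le_bound _ hc fun x => le_of_sq_le_sq ?_ (by positivity)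
  have hx := h x.ofLp
  rwa [← EuclideanSpace.norm_toLp_sq, ← EuclideanSpace.norm_toLp_sq, ← mul_pow] at hx

end matOpNorm

section gapForm

variable {m n : ℕ}

noncomputable def gapForm (A : Matrix (Fin m) (Fin n) ℝ) (σ : ℝ) :
    LinearMap.BilinForm ℝ (Fin n → ℝ) :=
  LinearMap.mk₂ ℝ (fun x y => σ * (x ⬝ᵥ y) - (A *ᵥ x) ⬝ᵥ (A *ᵥ y))
    (fun _ _ _ => by simp only [add_dotProduct, mulVec_add]; ring)
    (fun _ _ _ => by simp only [smul_dotProduct, mulVec_smul, smul_eq_mul]; ring)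
    (fun _ _ _ => by simp only [dotProduct_add, mulVec_add]; ring)
    (fun _ _ _ => by simp only [dotProduct_smul, mulVec_smul, smul_eq_mul]; ring)

lemma gapForm_apply (A : Matrix (Fin m) (Fin n) ℝ) (σ : ℝ) (x y : Fin n → ℝ) :
    gapForm A σ x y = σ * (x ⬝ᵥ y) - (A *ᵥ x) ⬝ᵥ (A *ᵥ y) := rfl

lemma gapForm_comm (A : Matrix (Fin m) (Fin n) ℝ) (σ : ℝ) (x y : Fin n → ℝ) :
    gapForm A σ x y = gapForm A σ y x := by
  simp only [gapForm_apply, dotProduct_comm x, dotProduct_comm (A *ᵥ x)]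

lemma smul_sub_mulVec_dotProduct_eq_gapForm (A : Matrix (Fin m) (Fin n) ℝ) (σ : ℝ)
    (v x : Fin n → ℝ) : (σ • v - (Aᵀ * A) *ᵥ v) ⬝ᵥ x = gapForm A σ v x := by
  rw [gapForm_apply, sub_dotProduct, smul_dotProduct, smul_eq_mul, ← mulVec_mulVec,
    mulVec_transpose, ← dotProduct_mulVec]

lemma gapForm_self_nonneg {A : Matrix (Fin m) (Fin n) ℝ} {σ : ℝ} (hσ : matOpNorm A ^ 2 ≤ σ)
    (x : Fin n → ℝ) : 0 ≤ gapForm A σ x x := by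
  rw [gapForm_apply, sub_nonneg]
  exact (dotProduct_mulVec_self_le A x).trans
    (mul_le_mul_of_nonneg_right hσ (dotProduct_self_star_nonneg x))

lemma gapForm_sq_le {A : Matrix (Fin m) (Fin n) ℝ} {σ : ℝ} (hσ : matOpNorm A ^ 2 ≤ σ)
    (x y : Fin n → ℝ) : gapForm A σ x y ^ 2 ≤ gapForm A σ x x * gapForm A σ y y := by
  simpa only [sq, gapForm_comm A σ y x] using
    (gapForm A σ).apply_mul_apply_le_of_forall_zero_le (gapForm_self_nonneg hσ) x y

lemma inv_sqrt_mul_gapForm_sq_le {A : Matrix (Fin m) (Fin n) ℝ} {σ : ℝ}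
    (hσ : matOpNorm A ^ 2 ≤ σ) {v : Fin n → ℝ} (hv : 0 < gapForm A σ v v) (x : Fin n → ℝ) :
    ((√(gapForm A σ v v))⁻¹ * gapForm A σ v x) ^ 2 ≤ gapForm A σ x x := by
  rw [mul_pow, inv_pow, Real.sq_sqrt hv.le, inv_mul_le_iff₀ hv]
  exact gapForm_sq_le hσ v x

end gapForm

section snoc

variable {m n : ℕ}

lemma snoc_mulVec_dotProduct_self (A : Matrix (Fin m) (Fin n) ℝ) (u x : Fin n → ℝ) :
    (of (Fin.snoc (A : Fin m → Fin n → ℝ) u) *ᵥ x) ⬝ᵥ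
        (of (Fin.snoc (A : Fin m → Fin n → ℝ) u) *ᵥ x)
      = (A *ᵥ x) ⬝ᵥ (A *ᵥ x) + (u ⬝ᵥ x) ^ 2 := by
  simp [dotProduct, mulVec, Fin.sum_univ_castSucc, sq, Fin.snoc]

lemma matOpNorm_le_matOpNorm_snoc (A : Matrix (Fin m) (Fin n) ℝ) (u : Fin n → ℝ) :
    matOpNorm A ≤ matOpNorm (of (Fin.snoc (A : Fin m → Fin n → ℝ) u)) := by
  refine matOpNorm_le_of_forall_dotProduct_le (matOpNorm_nonneg _) fun x => ?_
  calc (A *ᵥ x) ⬝ᵥ (A *ᵥ x)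
      ≤ (A *ᵥ x) ⬝ᵥ (A *ᵥ x) + (u ⬝ᵥ x) ^ 2 := le_add_of_nonneg_right (sq_nonneg _)
    _ = _ := (snoc_mulVec_dotProduct_self A u x).symm
    _ ≤ _ := dotProduct_mulVec_self_le _ x

lemma matOpNorm_snoc_le {A : Matrix (Fin m) (Fin n) ℝ} {u : Fin n → ℝ} {c : ℝ} (hc : 0 ≤ c)
    (hu : ∀ x, (u ⬝ᵥ x) ^ 2 ≤ gapForm A (c ^ 2) x x) :
    matOpNorm (of (Fin.snoc (A : Fin m → Fin n → ℝ) u)) ≤ c :=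
  matOpNorm_le_of_forall_dotProduct_le hc fun x => by
    rw [snoc_mulVec_dotProduct_self]
    linarith [hu x, gapForm_apply A (c ^ 2) x x]

end snoc

/-- With `σ = ‖A‖²`, `v` a unit vector with `‖Av‖² < σ`, and
`u = (σv − AᵀAv)/√(σ − ‖Av‖²)`, the operator norm of the stacked matrix
`(A; uᵀ)` equals `‖A‖`. -/
theorem imro1d_stacked_norm {m n : ℕ} (A : Matrix (Fin m) (Fin n) ℝ)
    (v : Fin n → ℝ) (hv : v ⬝ᵥ v = 1)
    (hdom : (A.mulVec v) ⬝ᵥ (A.mulVec v) < (matOpNorm A)^2) :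
    let σ : ℝ := (matOpNorm A)^2
    let u : Fin n → ℝ :=
      (Real.sqrt (σ - (A.mulVec v) ⬝ᵥ (A.mulVec v)))⁻¹ •
        (σ • v - (Aᵀ * A).mulVec v)
    matOpNorm (Matrix.of (Fin.snoc (A : Fin m → Fin n → ℝ) u)) = matOpNorm A := by
  intro σ u
  have hvv : σ - (A *ᵥ v) ⬝ᵥ (A *ᵥ v) = gapForm A σ v v := by rw [gapForm_apply, hv, mul_one]
  have hs : 0 < gapForm A σ v v := hvv ▸ sub_pos.2 hdom
  have hu : ∀ x, u ⬝ᵥ x = (√(gapForm A σ v v))⁻¹ * gapForm A σ v x := fun x => by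
    rw [smul_dotProduct, smul_sub_mulVec_dotProduct_eq_gapForm, hvv, smul_eq_mul]
  refine le_antisymm (matOpNorm_snoc_le (matOpNorm_nonneg A) fun x => ?_)
    (matOpNorm_le_matOpNorm_snoc A u)
  rw [hu]
  exact inv_sqrt_mul_gapForm_sq_le le_rfl hs x
end

section
/- Let S ⪰ 0 be a symmetric 2×2 matrix, ε ∈ [−1,1], η₁ = 1 − ε² > 0, η₂ = −S₁₁ − S₂₂ + 2εS₁₂, η₃ = det(S), and σ = (−η₂ + √(η₂² − 4η₁η₃))/(2η₁). Then σ ≥ S₁₁ and σ ≥ S₂₂. -/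
open Matrix

lemma imro2d_aux (η₁ η₂ η₃ a : ℝ) (h1 : 0 < η₁)
    (hq : η₁ * a ^ 2 + η₂ * a + η₃ ≤ 0) :
    (-η₂ + Real.sqrt (η₂ ^ 2 - 4 * η₁ * η₃)) / (2 * η₁) ≥ a := by
  have hD : (2 * η₁ * a + η₂) ^ 2 ≤ η₂ ^ 2 - 4 * η₁ * η₃ := by nlinarith
  have h2 := Real.sqrt_le_sqrt hD
  rw [Real.sqrt_sq_eq_abs] at h2
  have h3 : 2 * η₁ * a + η₂ ≤ Real.sqrt (η₂ ^ 2 - 4 * η₁ * η₃) :=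
    le_trans (le_abs_self _) h2
  rw [ge_iff_le, le_div_iff₀ (by positivity)]
  linarith

/-- With `η₁ = 1 − ε² > 0` and `σ` the larger root of `η₁σ² + η₂σ + η₃ = 0`,
one has `σ ≥ S₁₁` and `σ ≥ S₂₂`. -/
theorem imro2d_sigma_ge (S : Matrix (Fin 2) (Fin 2) ℝ) (hS : S.PosSemidef)
    (ε : ℝ) (hε : ε^2 < 1) :
    let η₁ : ℝ := 1 - ε^2
    let η₂ : ℝ := -(S 0 0) - S 1 1 + 2 * ε * S 0 1
    let η₃ : ℝ := S.det
    let σ : ℝ := (-η₂ + Real.sqrt (η₂^2 - 4 * η₁ * η₃)) / (2 * η₁)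
    σ ≥ S 0 0 ∧ σ ≥ S 1 1 := by
  intro η₁ η₂ η₃ σ
  have h1 : (0:ℝ) < η₁ := by simp only [η₁]; linarith
  have hsym : S 1 0 = S 0 1 := by
    have := hS.isHermitian.apply 0 1
    simpa using this
  have hdet : η₃ = S 0 0 * S 1 1 - S 0 1 * S 0 1 := by
    simp only [η₃, Matrix.det_fin_two, hsym]
  constructor
  · exact imro2d_aux η₁ η₂ η₃ (S 0 0) h1 (by
      rw [hdet]; simp only [η₁, η₂]; nlinarith [sq_nonneg (ε * S 0 0 - S 0 1)])
  · exact imro2d_aux η₁ η₂ η₃ (S 1 1) h1 (by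
      rw [hdet]; simp only [η₁, η₂]; nlinarith [sq_nonneg (ε * S 1 1 - S 0 1)])
end

section
/- Let f be convex and differentiable, p convex, F = f + p, H ≻ 0, and suppose x̄ minimizes x ↦ f(xᵏ) + ⟨∇f(xᵏ), x−xᵏ⟩ + (1/2)‖x−xᵏ‖²_H + p(x) with x̄ ≠ xᵏ. Then ⟨∇f(xᵏ), x̄−xᵏ⟩ + p(x̄) − p(xᵏ) < −(1/2)‖x̄−xᵏ‖²_H, so x̄−xᵏ is a descent direction for F at xᵏ. -/
open scoped RealInnerProductSpace

/-- Descent property: if `x̄ ≠ xᵏ` minimizes the quadratic model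
`M_H(x) = f(xᵏ) + ⟨∇f(xᵏ), x−xᵏ⟩ + (1/2)‖x−xᵏ‖²_H + p(x)` with `H ≻ 0`, then
`⟨∇f(xᵏ), x̄−xᵏ⟩ + p(x̄) − p(xᵏ) < −(1/2)‖x̄−xᵏ‖²_H`. -/
theorem imro_descent_direction {n : ℕ}
    (f p : EuclideanSpace ℝ (Fin n) → ℝ) (f' : EuclideanSpace ℝ (Fin n) → EuclideanSpace ℝ (Fin n))
    (hf : ConvexOn ℝ Set.univ f) (hf' : ∀ x, HasGradientAt f (f' x) x)
    (hp : ConvexOn ℝ Set.univ p)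
    (H : EuclideanSpace ℝ (Fin n) →L[ℝ] EuclideanSpace ℝ (Fin n))
    (hHsym : ∀ z w, ⟪H z, w⟫ = ⟪z, H w⟫)
    (hHpos : ∀ z, z ≠ 0 → 0 < ⟪z, H z⟫)
    (xk xbar : EuclideanSpace ℝ (Fin n))
    (hmin : ∀ x, f xk + ⟪f' xk, xbar - xk⟫ + (1/2) * ⟪xbar - xk, H (xbar - xk)⟫ + p xbar
      ≤ f xk + ⟪f' xk, x - xk⟫ + (1/2) * ⟪x - xk, H (x - xk)⟫ + p x)
    (hne : xbar ≠ xk) :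
    ⟪f' xk, xbar - xk⟫ + p xbar - p xk < -(1/2) * ⟪xbar - xk, H (xbar - xk)⟫ := by
  set d := xbar - xk with hd
  have hq : 0 < ⟪d, H d⟫ := hHpos d (sub_ne_zero.mpr hne)
  have hconv := hp.2 (Set.mem_univ xk) (Set.mem_univ xbar)
    (by norm_num : (0:ℝ) ≤ 1/2) (by norm_num : (0:ℝ) ≤ 1/2) (by norm_num)
  have hx : (1/2 : ℝ) • xk + (1/2 : ℝ) • xbar = xk + (1/2:ℝ) • d := by
    rw [hd]; module
  rw [hx] at hconv
  have hm := hmin (xk + (1/2:ℝ) • d)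
  have h1 : xk + (1/2:ℝ) • d - xk = (1/2:ℝ) • d := by abel
  rw [h1] at hm
  have h2 : ⟪f' xk, (1/2:ℝ) • d⟫ = (1/2) * ⟪f' xk, d⟫ := real_inner_smul_right _ _ _
  have h3 : ⟪(1/2:ℝ) • d, H ((1/2:ℝ) • d)⟫ = (1/4) * ⟪d, H d⟫ := by
    rw [map_smul, real_inner_smul_left, real_inner_smul_right]; ring
  rw [h2, h3] at hm
  simp only [smul_eq_mul] at hconv
  linarith
end

section
/- Suppose H ≻ 0, x̄ is the unique minimizer of M_H(x, xᵏ) = f(xᵏ) + ⟨∇f(xᵏ), x−xᵏ⟩ + (1/2)‖x−xᵏ‖²_H + p(x), x̄ ≠ xᵏ, and F(x̄) ≤ M_H(x̄, xᵏ). Then F(x̄) < F(xᵏ), and moreover for any α ∈ (0,1], F(xᵏ + α(x̄−xᵏ)) < F(xᵏ). -/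
open scoped RealInnerProductSpace

/-- If `x̄ ≠ xᵏ` is the minimizer of the quadratic model `M_H(·, xᵏ)` with `H ≻ 0`
and `F(x̄) ≤ M_H(x̄, xᵏ)`, then `F(x̄) < F(xᵏ)` and, for any `α ∈ (0,1]`,
`F(xᵏ + α(x̄−xᵏ)) < F(xᵏ)`. -/
theorem imro_decrease {n : ℕ}
    (f p : EuclideanSpace ℝ (Fin n) → ℝ) (f' : EuclideanSpace ℝ (Fin n) → EuclideanSpace ℝ (Fin n))
    (hf : ConvexOn ℝ Set.univ f) (hf' : ∀ x, HasGradientAt f (f' x) x)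
    (hp : ConvexOn ℝ Set.univ p)
    (H : EuclideanSpace ℝ (Fin n) →L[ℝ] EuclideanSpace ℝ (Fin n))
    (hHsym : ∀ z w, ⟪H z, w⟫ = ⟪z, H w⟫)
    (hHpos : ∀ z, z ≠ 0 → 0 < ⟪z, H z⟫)
    (xk xbar : EuclideanSpace ℝ (Fin n)) :
    let F : EuclideanSpace ℝ (Fin n) → ℝ := fun x => f x + p x
    let M : EuclideanSpace ℝ (Fin n) → ℝ := fun x =>
      f xk + ⟪f' xk, x - xk⟫ + (1/2) * ⟪x - xk, H (x - xk)⟫ + p x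
    (∀ x, M xbar ≤ M x) → xbar ≠ xk → F xbar ≤ M xbar →
    F xbar < F xk ∧ ∀ α : ℝ, α ∈ Set.Ioc (0:ℝ) 1 → F (xk + α • (xbar - xk)) < F xk := by
  intro F M hmin hne hFM
  set z := xbar - xk with hzdef
  have hz0 : z ≠ 0 := sub_ne_zero.mpr hne
  have hQ : 0 < ⟪z, H z⟫ := hHpos z hz0
  set Q : ℝ := ⟪z, H z⟫ with hQdef
  set g : ℝ := ⟪f' xk, z⟫ with hgdef
  -- value at midpoint
  have hmid : (xk + (1/2 : ℝ) • z) = (1/2 : ℝ) • xbar + (1/2 : ℝ) • xk := by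
    rw [hzdef]; module
  have hpmid : p (xk + (1/2 : ℝ) • z) ≤ (1/2) * p xbar + (1/2) * p xk := by
    rw [hmid]
    exact hp.2 (Set.mem_univ xbar) (Set.mem_univ xk) (by norm_num) (by norm_num) (by norm_num)
  have hMmid : M (xk + (1/2 : ℝ) • z) ≤
      f xk + (1/2) * g + (1/8) * Q + ((1/2) * p xbar + (1/2) * p xk) := by
    have h1 : (xk + (1/2 : ℝ) • z) - xk = (1/2 : ℝ) • z := by abel
    show f xk + ⟪f' xk, (xk + (1/2 : ℝ) • z) - xk⟫ +
        (1/2) * ⟪(xk + (1/2 : ℝ) • z) - xk, H ((xk + (1/2 : ℝ) • z) - xk)⟫ +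
        p (xk + (1/2 : ℝ) • z) ≤ _
    rw [h1, map_smul, real_inner_smul_right, real_inner_smul_left, real_inner_smul_right]
    rw [hgdef, hQdef]
    nlinarith [hpmid]
  have hMbar : M xbar = f xk + g + (1/2) * Q + p xbar := by
    show f xk + ⟪f' xk, xbar - xk⟫ + (1/2) * ⟪xbar - xk, H (xbar - xk)⟫ + p xbar = _
    rw [← hzdef, hgdef, hQdef]
  have hMxk : M xk = f xk + p xk := by
    show f xk + ⟪f' xk, xk - xk⟫ + (1/2) * ⟪xk - xk, H (xk - xk)⟫ + p xk = _
    simp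
  have key : M xbar < M xk := by
    have h2 := hmin (xk + (1/2 : ℝ) • z)
    rw [hMbar, hMxk]
    rw [hMbar] at h2
    nlinarith [le_trans h2 hMmid]
  have hFbar : F xbar < F xk := by
    calc F xbar ≤ M xbar := hFM
    _ < M xk := key
    _ = F xk := hMxk
  refine ⟨hFbar, fun α hα => ?_⟩
  obtain ⟨hα0, hα1⟩ := hα
  have hmix : xk + α • (xbar - xk) = α • xbar + (1 - α) • xk := by module
  have hFconv : ConvexOn ℝ Set.univ F := hf.add hp
  have h3 : F (xk + α • (xbar - xk)) ≤ α * F xbar + (1 - α) * F xk := by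
    rw [hmix]
    exact hFconv.2 (Set.mem_univ xbar) (Set.mem_univ xk) (le_of_lt hα0)
      (by linarith) (by ring)
  nlinarith
end

section
/- Let F = f + p with f convex differentiable and p convex, H ≻ 0, and let x^{k+1} be a minimizer of M_H(x, xᵏ) = f(xᵏ) + ⟨∇f(xᵏ), x−xᵏ⟩ + (1/2)‖x−xᵏ‖²_H + p(x). If F(x^{k+1}) ≤ M_H(x^{k+1}, xᵏ), then for all x ∈ ℝⁿ, F(x) − F(x^{k+1}) ≥ (1/2)‖x^{k+1}−xᵏ‖²_H + ⟨H(xᵏ−x^{k+1}), x−xᵏ⟩. -/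
/-!
The first-order optimality condition for the convex-plus-smooth model `M_H(·, xᵏ)` says that
`-(∇f(xᵏ) + H(x^{k+1} - xᵏ))` is a subgradient of `p` at `x^{k+1}`. Adding this subgradient
inequality, the gradient inequality of `f` at `xᵏ` and `F(x^{k+1}) ≤ M_H(x^{k+1}, xᵏ)`, the
`∇f(xᵏ)` terms cancel and what is left is the claimed bound.
-/

open scoped RealInnerProductSpace
open Set Filter Topology

section LineDeriv

variable {E : Type*} [AddCommGroup E] [Module ℝ E] {f q p : E → ℝ} {f' q' : ℝ} {x y v : E}

theorem ConvexOn.inv_mul_sub_le_sub (hf : ConvexOn ℝ univ f) (x v : E) {t : ℝ}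
    (ht : t ∈ Ioc 0 1) : t⁻¹ * (f (x + t • v) - f x) ≤ f (x + v) - f x := by
  have hconv : f (x + t • v) ≤ (1 - t) * f x + t * f (x + v) := by
    have hx : (1 - t) • x + t • (x + v) = x + t • v := by module
    simpa only [hx, smul_eq_mul] using
      hf.2 (mem_univ x) (mem_univ (x + v)) (sub_nonneg.2 ht.2) ht.1.le (by ring)
  rw [inv_mul_le_iff₀ ht.1]
  linarith

theorem ConvexOn.le_sub_of_hasLineDerivAt (hf : ConvexOn ℝ univ f)
    (h : HasLineDerivAt ℝ f f' x v) : f' ≤ f (x + v) - f x :=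
  le_of_tendsto h.tendsto_slope_zero_right <| by
    filter_upwards [Ioc_mem_nhdsGT zero_lt_one] with t ht
    exact hf.inv_mul_sub_le_sub x v ht

theorem ConvexOn.neg_le_sub_of_isMinOn_add (hp : ConvexOn ℝ univ p)
    (hmin : IsMinOn (q + p) univ y) (hq : HasLineDerivAt ℝ q q' y v) :
    -q' ≤ p (y + v) - p y := by
  refine neg_le.1 <| ge_of_tendsto hq.tendsto_slope_zero_right ?_
  filter_upwards [Ioc_mem_nhdsGT zero_lt_one] with t ht
  have hslope : 0 ≤ t⁻¹ * ((q + p) (y + t • v) - (q + p) y) :=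
    mul_nonneg (inv_nonneg.2 ht.1.le) (sub_nonneg.2 (hmin (mem_univ _)))
  have hchord := hp.inv_mul_sub_le_sub y v ht
  simp only [Pi.add_apply, smul_eq_mul] at hslope ⊢
  linarith

end LineDeriv

section Gradient

variable {E : Type*} [NormedAddCommGroup E] [InnerProductSpace ℝ E] [CompleteSpace E]

theorem HasGradientAt.hasLineDerivAt_inner {f : E → ℝ} {g x : E} (h : HasGradientAt f g x)
    (v : E) : HasLineDerivAt ℝ f ⟪g, v⟫ x v :=
  h.hasFDerivAt.hasLineDerivAt v

theorem ConvexOn.add_inner_sub_le_of_hasGradientAt {f : E → ℝ} {g x : E}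
    (hf : ConvexOn ℝ univ f) (h : HasGradientAt f g x) (y : E) : f x + ⟪g, y - x⟫ ≤ f y := by
  have := hf.le_sub_of_hasLineDerivAt (h.hasLineDerivAt_inner (y - x))
  rw [add_sub_cancel] at this
  linarith

theorem hasGradientAt_add_inner_sub_add_half_inner_sub_map (H : E →L[ℝ] E)
    (hH : ∀ z w, ⟪H z, w⟫ = ⟪z, H w⟫) (a : ℝ) (g c x : E) :
    HasGradientAt (fun z ↦ a + ⟪g, z - c⟫ + (1 / 2) * ⟪z - c, H (z - c)⟫) (g + H (x - c)) x := by
  have hsub : HasFDerivAt (fun z : E ↦ z - c) (ContinuousLinearMap.id ℝ E) x :=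
    (hasFDerivAt_id x).sub_const c
  have hderiv := ((hasFDerivAt_const a x).add ((hasFDerivAt_const g x).inner ℝ hsub)).add
    ((hsub.inner ℝ (H.hasFDerivAt.comp x hsub)).const_mul (1 / 2))
  rw [hasGradientAt_iff_hasFDerivAt]
  refine hderiv.congr_fderiv ?_
  ext v
  have hsymm : ⟪x - c, H v⟫ = ⟪H (x - c), v⟫ := (hH _ _).symm
  simp only [zero_add, one_div, Function.comp_apply, map_sub, ContinuousLinearMap.comp_id,
    add_apply, ContinuousLinearMap.comp_apply,
    ContinuousLinearMap.prod_apply, zero_apply,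
    ContinuousLinearMap.id_apply, fderivInnerCLM_apply, real_inner_comm v, inner_sub_right,
    inner_zero_left, sub_self, add_zero, smul_apply, hsymm, smul_eq_mul,
    map_add, InnerProductSpace.toDual_apply_apply, sub_apply,
    add_right_inj]
  ring

end Gradient

theorem imro_lower_bound_general {n : ℕ}
    (f p : EuclideanSpace ℝ (Fin n) → ℝ) (f' : EuclideanSpace ℝ (Fin n) → EuclideanSpace ℝ (Fin n))
    (hf : ConvexOn ℝ Set.univ f) (hf' : ∀ x, HasGradientAt f (f' x) x)
    (hp : ConvexOn ℝ Set.univ p)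
    (H : EuclideanSpace ℝ (Fin n) →L[ℝ] EuclideanSpace ℝ (Fin n))
    (hHsym : ∀ z w, ⟪H z, w⟫ = ⟪z, H w⟫)
    (xk xk1 : EuclideanSpace ℝ (Fin n)) :
    let F : EuclideanSpace ℝ (Fin n) → ℝ := fun x => f x + p x
    let M : EuclideanSpace ℝ (Fin n) → ℝ := fun x =>
      f xk + ⟪f' xk, x - xk⟫ + (1/2) * ⟪x - xk, H (x - xk)⟫ + p x
    (∀ x, M xk1 ≤ M x) → F xk1 ≤ M xk1 →
    ∀ x, F x - F xk1 ≥ (1/2) * ⟪xk1 - xk, H (xk1 - xk)⟫ + ⟪H (xk - xk1), x - xk⟫ := by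
  intro F M hmin hdescent x
  have hlin : f xk + ⟪f' xk, x - xk⟫ ≤ f x := hf.add_inner_sub_le_of_hasGradientAt (hf' xk) x
  have hsubgrad : -⟪f' xk + H (xk1 - xk), x - xk1⟫ ≤ p (xk1 + (x - xk1)) - p xk1 :=
    hp.neg_le_sub_of_isMinOn_add (isMinOn_univ_iff.2 hmin)
      ((hasGradientAt_add_inner_sub_add_half_inner_sub_map H hHsym (f xk) (f' xk) xk xk1
        ).hasLineDerivAt_inner _)
  have hx : x - xk = (x - xk1) + (xk1 - xk) := by abel
  have hx' : xk - xk1 = -(xk1 - xk) := by abel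
  simp only [F, M, add_sub_cancel] at hdescent hsubgrad ⊢
  rw [hx] at hlin ⊢
  rw [hx']
  simp only [inner_add_left, inner_add_right, map_neg, inner_neg_left, real_inner_comm (H _)]
    at hlin hdescent hsubgrad ⊢
  linarith

/-- Key lemma: if `x^{k+1}` minimizes `M_H(·, xᵏ)` and `F(x^{k+1}) ≤ M_H(x^{k+1}, xᵏ)`,
then for all `x`, `F(x) − F(x^{k+1}) ≥ (1/2)‖x^{k+1}−xᵏ‖²_H + ⟨H(xᵏ−x^{k+1}), x−xᵏ⟩`. -/
theorem imro_lower_bound {n : ℕ}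
    (f p : EuclideanSpace ℝ (Fin n) → ℝ) (f' : EuclideanSpace ℝ (Fin n) → EuclideanSpace ℝ (Fin n))
    (hf : ConvexOn ℝ Set.univ f) (hf' : ∀ x, HasGradientAt f (f' x) x)
    (hp : ConvexOn ℝ Set.univ p)
    (H : EuclideanSpace ℝ (Fin n) →L[ℝ] EuclideanSpace ℝ (Fin n))
    (hHsym : ∀ z w, ⟪H z, w⟫ = ⟪z, H w⟫)
    (hHpos : ∀ z, z ≠ 0 → 0 < ⟪z, H z⟫)
    (xk xk1 : EuclideanSpace ℝ (Fin n)) :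
    let F : EuclideanSpace ℝ (Fin n) → ℝ := fun x => f x + p x
    let M : EuclideanSpace ℝ (Fin n) → ℝ := fun x =>
      f xk + ⟪f' xk, x - xk⟫ + (1/2) * ⟪x - xk, H (x - xk)⟫ + p x
    (∀ x, M xk1 ≤ M x) → F xk1 ≤ M xk1 →
    ∀ x, F x - F xk1 ≥ (1/2) * ⟪xk1 - xk, H (xk1 - xk)⟫ + ⟪H (xk - xk1), x - xk⟫ :=
  imro_lower_bound_general f p f' hf hf' hp H hHsym xk xk1
end

section
/- With the hypotheses of the descent lemma (x^{k+1} minimizes M_H(·, xᵏ), F(x^{k+1}) ≤ M_H(x^{k+1}, xᵏ)), and additionally H ⪯ σI, one has for all x: F(x) ≥ F(x^{k+1}) + ⟨g_H, x−xᵏ⟩ + (1/(2σ))‖g_H‖², where g_H = H(xᵏ−x^{k+1}). In particular, taking x = xᵏ gives F(x^{k+1}) ≤ F(xᵏ) − (1/(2σ))‖g_H‖². -/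
/-!
Both convex pieces of `F` are bounded below by affine functions: `f` by its tangent at `xᵏ`,
and `p` by the affine function with slope `g_H - ∇f(xᵏ)` given by the first-order optimality
of `x^{k+1}` for `M_H(·, xᵏ)`; since `p` need not be differentiable, that condition is obtained
by comparing `M_H` along segments out of `x^{k+1}` and letting the step tend to `0`. Adding the
two bounds and using `F(x^{k+1}) ≤ M_H(x^{k+1}, xᵏ)` gives
`F(x) ≥ F(x^{k+1}) + ⟨g_H, x - xᵏ⟩ + ½⟨u, Hu⟩` with `u = xᵏ - x^{k+1}`. Finally
`‖Hu‖² ≤ σ⟨u, Hu⟩`, which is positivity of `H` tested on `σu - Hu`.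
-/

open scoped RealInnerProductSpace
open Set Filter Topology

theorem ConvexOn.neg_le_slope_of_hasDerivWithinAt_of_forall_add_le {S : Set ℝ} {φ ψ : ℝ → ℝ}
    {a b d : ℝ} (hφ : ConvexOn ℝ S φ) (ha : a ∈ S) (hb : b ∈ S) (hab : a < b)
    (hψ : HasDerivWithinAt ψ d (Ioi a) a) (hmin : ∀ t ∈ S, ψ a + φ a ≤ ψ t + φ t) :
    -d ≤ slope φ a b := by
  have hslope : Tendsto (fun t => -slope ψ a t) (𝓝[>] a) (𝓝 (-d)) := by
    simpa using (hasDerivWithinAt_iff_tendsto_slope.mp hψ).neg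
  refine le_of_tendsto hslope ?_
  filter_upwards [Ioc_mem_nhdsGT hab] with t ⟨hat, htb⟩
  have ht : t ∈ S := hφ.1.ordConnected.out ha hb ⟨hat.le, htb⟩
  calc -slope ψ a t ≤ slope φ a t := by
        rw [slope_def_field, slope_def_field, ← neg_div, div_le_div_iff_of_pos_right (by linarith)]
        linarith [hmin t ht]
    _ ≤ slope φ a b := hφ.slope_mono ha ⟨ht, hat.ne'⟩ ⟨hb, hab.ne'⟩ htb

section InnerProductSpace

variable {E : Type*} [NormedAddCommGroup E] [InnerProductSpace ℝ E]

theorem ContinuousLinearMap.IsPositive.norm_apply_sq_le {T : E →L[ℝ] E} (hT : T.IsPositive)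
    {σ : ℝ} (hσ : 0 < σ) (hTσ : ∀ z, ⟪z, T z⟫ ≤ σ * ‖z‖ ^ 2) (u : E) :
    ‖T u‖ ^ 2 ≤ σ * ⟪u, T u⟫ := by
  have hpos := hT.inner_nonneg_right (σ • u - T u)
  have hTTu : ⟪u, T (T u)⟫ = ‖T u‖ ^ 2 := by
    rw [← hT.inner_left_eq_inner_right, real_inner_self_eq_norm_sq]
  have hTu : ⟪T u, T u⟫ = ‖T u‖ ^ 2 := real_inner_self_eq_norm_sq _
  have hσTu := hTσ (T u)
  simp only [map_sub, map_smul, inner_sub_left, inner_sub_right, real_inner_smul_left,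
    real_inner_smul_right, hTTu, hTu] at hpos
  nlinarith

variable [CompleteSpace E]

theorem HasGradientAt.hasDerivAt_comp_lineMap {f : E → ℝ} {g x : E} (hf : HasGradientAt f g x)
    (y : E) : HasDerivAt (f ∘ AffineMap.lineMap (k := ℝ) x y) ⟪g, y - x⟫ 0 := by
  have := (AffineMap.lineMap_apply_zero (k := ℝ) x y).symm ▸ hf.hasFDerivAt
  simpa using this.comp_hasDerivAt (0 : ℝ) AffineMap.hasDerivAt_lineMap

theorem ConvexOn.add_inner_le_of_hasGradientAt {f : E → ℝ} {g x : E} (hf : ConvexOn ℝ univ f)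
    (hg : HasGradientAt f g x) (y : E) : f x + ⟪g, y - x⟫ ≤ f y := by
  have := (hf.comp_affineMap (AffineMap.lineMap (k := ℝ) x y)).le_slope_of_hasDerivAt
    (mem_univ 0) (mem_univ 1) zero_lt_one (HasGradientAt.hasDerivAt_comp_lineMap hg y)
  simp only [slope_def_field, Function.comp_apply, AffineMap.lineMap_apply_one,
    AffineMap.lineMap_apply_zero, sub_zero, div_one] at this
  linarith

theorem ConvexOn.sub_inner_le_of_hasGradientAt_of_forall_add_le {φ ψ : E → ℝ} {g x : E}
    (hφ : ConvexOn ℝ univ φ) (hψ : HasGradientAt ψ g x) (hmin : ∀ y, ψ x + φ x ≤ ψ y + φ y)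
    (y : E) : φ x - ⟪g, y - x⟫ ≤ φ y := by
  have := (hφ.comp_affineMap (AffineMap.lineMap (k := ℝ) x y))
    |>.neg_le_slope_of_hasDerivWithinAt_of_forall_add_le (mem_univ 0) (mem_univ 1) zero_lt_one
      (HasGradientAt.hasDerivAt_comp_lineMap hψ y).hasDerivWithinAt
      (fun t _ => by simpa using hmin _)
  simp only [slope_def_field, Function.comp_apply, AffineMap.lineMap_apply_one,
    AffineMap.lineMap_apply_zero, sub_zero, div_one] at this
  linarith

theorem hasGradientAt_const_add_inner_add_half_inner_map {T : E →L[ℝ] E}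
    (hT : (T : E →ₗ[ℝ] E).IsSymmetric) (c : ℝ) (d a x : E) :
    HasGradientAt (fun y => c + ⟪d, y - a⟫ + (1 / 2) * ⟪y - a, T (y - a)⟫) (d + T (x - a)) x := by
  have hsub : HasFDerivAt (fun y : E => y - a) (ContinuousLinearMap.id ℝ E) x :=
    (hasFDerivAt_id x).sub_const a
  have := ((hasFDerivAt_const c x).add ((hasFDerivAt_const d x).inner ℝ hsub)).add
    ((hsub.inner ℝ (T.hasFDerivAt.comp x hsub)).const_mul (1 / 2))
  rw [hasGradientAt_iff_hasFDerivAt]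
  refine this.congr_fderiv ?_
  ext v
  have hsymm := hT (x - a) v
  simp only [ContinuousLinearMap.coe_coe, map_sub, inner_sub_left] at hsymm
  simp only [zero_add, one_div, Function.comp_apply, map_sub, ContinuousLinearMap.comp_id,
    add_apply, ContinuousLinearMap.comp_apply, ContinuousLinearMap.prod_apply,
    zero_apply, ContinuousLinearMap.id_apply, fderivInnerCLM_apply,
    inner_zero_left, add_zero, smul_apply, smul_eq_mul, map_add,
    InnerProductSpace.toDual_apply_apply, sub_apply, add_right_inj]
  rw [inner_sub_left, inner_sub_right, real_inner_comm (T x) v, real_inner_comm (T a) v]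
  linarith

end InnerProductSpace

/-- With `H ⪯ σI` in addition: for all `x`,
`F(x) ≥ F(x^{k+1}) + ⟨g_H, x−xᵏ⟩ + (1/(2σ))‖g_H‖²` where `g_H = H(xᵏ−x^{k+1})`;
in particular `F(x^{k+1}) ≤ F(xᵏ) − (1/(2σ))‖g_H‖²`. -/
theorem imro_sufficient_decrease {n : ℕ}
    (f p : EuclideanSpace ℝ (Fin n) → ℝ) (f' : EuclideanSpace ℝ (Fin n) → EuclideanSpace ℝ (Fin n))
    (hf : ConvexOn ℝ Set.univ f) (hf' : ∀ x, HasGradientAt f (f' x) x)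
    (hp : ConvexOn ℝ Set.univ p)
    (H : EuclideanSpace ℝ (Fin n) →L[ℝ] EuclideanSpace ℝ (Fin n))
    (hHsym : ∀ z w, ⟪H z, w⟫ = ⟪z, H w⟫)
    (hHpos : ∀ z, z ≠ 0 → 0 < ⟪z, H z⟫)
    (σ : ℝ) (hσ : 0 < σ) (hHle : ∀ z, ⟪z, H z⟫ ≤ σ * ‖z‖^2)
    (xk xk1 : EuclideanSpace ℝ (Fin n)) :
    let F : EuclideanSpace ℝ (Fin n) → ℝ := fun x => f x + p x
    let M : EuclideanSpace ℝ (Fin n) → ℝ := fun x =>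
      f xk + ⟪f' xk, x - xk⟫ + (1/2) * ⟪x - xk, H (x - xk)⟫ + p x
    let g : EuclideanSpace ℝ (Fin n) := H (xk - xk1)
    (∀ x, M xk1 ≤ M x) → F xk1 ≤ M xk1 →
    (∀ x, F x ≥ F xk1 + ⟪g, x - xk⟫ + (1/(2*σ)) * ‖g‖^2) ∧
    F xk1 ≤ F xk - (1/(2*σ)) * ‖g‖^2 := by
  intro F M g hmin hFM
  have hH : H.IsPositive := H.isPositive_iff.2 ⟨hHsym, fun z => by
    rcases eq_or_ne z 0 with rfl | hz
    · simp
    · exact (hHpos z hz).le.trans_eq (hHsym z z).symm⟩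
  have htangent : ∀ x, f xk + ⟪f' xk, x - xk⟫ ≤ f x := hf.add_inner_le_of_hasGradientAt (hf' xk)
  have hprox : ∀ x, p xk1 - ⟪f' xk + H (xk1 - xk), x - xk1⟫ ≤ p x :=
    hp.sub_inner_le_of_hasGradientAt_of_forall_add_le
      (hasGradientAt_const_add_inner_add_half_inner_map hH.isSymmetric _ _ _ _) hmin
  have hg : H (xk1 - xk) = -g := by rw [← map_neg, neg_sub]
  have hthree : ∀ x, F xk1 + ⟪g, x - xk⟫ + (1 / 2) * ⟪g, xk - xk1⟫ ≤ F x := by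
    intro x
    have hquad : ⟪xk1 - xk, H (xk1 - xk)⟫ = ⟪g, xk - xk1⟫ := by
      rw [hg, ← neg_sub xk, inner_neg_neg, real_inner_comm]
    have hpx := hprox x
    have hfx := htangent x
    simp only [F, M, hquad] at hFM ⊢
    simp only [hg, inner_add_left, inner_neg_left, inner_sub_right] at hpx hfx hFM ⊢
    linarith
  have hgain : (1 / (2 * σ)) * ‖g‖ ^ 2 ≤ (1 / 2) * ⟪g, xk - xk1⟫ := by
    have := hH.norm_apply_sq_le hσ hHle (xk - xk1)
    rw [real_inner_comm] at this
    rw [div_mul_eq_mul_div, one_mul, div_le_iff₀ (by positivity)]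
    linarith
  have hdescent : ∀ x, F x ≥ F xk1 + ⟪g, x - xk⟫ + (1 / (2 * σ)) * ‖g‖ ^ 2 := fun x => by
    linarith [hthree x]
  refine ⟨hdescent, ?_⟩
  have := hdescent xk
  rw [sub_self, inner_zero_right, add_zero] at this
  linarith
end

section
/- Under the hypotheses of the previous lemmas (x^{k+1} = x̄ᴴ(xᵏ), F(x^{k+1}) ≤ M_H(x^{k+1}, xᵏ)), and if ‖xᵏ−x*‖, ‖x^{k+1}−x*‖ ≤ δ and ‖z‖_H ≤ σ‖z‖ for all z, then F(xᵏ) − F(x^{k+1}) ≥ (F(x^{k+1}) − F(x*))²/(2σ²δ²). -/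
open scoped RealInnerProductSpace
open Filter Topology

variable {E : Type*} [NormedAddCommGroup E] [InnerProductSpace ℝ E] [CompleteSpace E]

/-- Gradient inequality for convex functions. -/
lemma convex_grad_ineq (f : E → ℝ) (g x y : E)
    (hf : ConvexOn ℝ Set.univ f) (hg : HasGradientAt f g x) :
    f x + ⟪g, y - x⟫ ≤ f y := by
  set c : ℝ → E := fun t => x + t • (y - x) with hc
  have hderiv : HasDerivAt (fun t => f (c t)) ⟪g, y - x⟫ 0 := by
    have h1 : HasDerivAt c (y - x) 0 := by
      simpa [hc] using ((hasDerivAt_id (0:ℝ)).smul_const (y - x)).const_add x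
    have hc0 : c 0 = x := by simp [hc]
    have h2 := (show HasFDerivAt f ((InnerProductSpace.toDual ℝ E) g) (c 0) by
      rw [hc0]; exact hg.hasFDerivAt).comp_hasDerivAt 0 h1
    exact h2
  have hslope : ∀ t ∈ Set.Ioc (0:ℝ) 1, slope (fun t => f (c t)) 0 t ≤ f y - f x := by
    intro t ht
    have hconv := hf.2 (Set.mem_univ x) (Set.mem_univ y) (by linarith [ht.2] : (0:ℝ) ≤ 1 - t)
      (le_of_lt ht.1) (by ring)
    have hcx : c t = (1 - t) • x + t • y := by
      simp [hc, smul_sub, sub_smul]; abel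
    have hc0 : c 0 = x := by simp [hc]
    rw [slope_def_field, hcx, hc0, sub_zero, div_le_iff₀ ht.1]
    simp only [smul_eq_mul] at hconv
    nlinarith [ht.1, hconv]
  have htend : Tendsto (slope (fun t => f (c t)) 0) (𝓝[>] 0) (𝓝 ⟪g, y - x⟫) :=
    (hasDerivAt_iff_tendsto_slope.mp hderiv).mono_left
      (nhdsWithin_mono 0 (fun t ht => ne_of_gt ht))
  have hle : ⟪g, y - x⟫ ≤ f y - f x := by
    refine le_of_tendsto htend ?_
    filter_upwards [Ioc_mem_nhdsGT (by norm_num : (0:ℝ) < 1)] with t ht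
    exact hslope t ht
  linarith

lemma expand_H (H : E →L[ℝ] E) (hHsym : ∀ z w, ⟪H z, w⟫ = ⟪z, H w⟫) (u v : E) (t : ℝ) :
    ⟪u + t • v, H (u + t • v)⟫ = ⟪u, H u⟫ + 2 * t * ⟪u, H v⟫ + t ^ 2 * ⟪v, H v⟫ := by
  have h1 : ⟪v, H u⟫ = ⟪u, H v⟫ := by rw [real_inner_comm, hHsym]
  simp only [map_add, map_smul, inner_add_left, inner_add_right, real_inner_smul_left,
    real_inner_smul_right]
  rw [h1]; ring

/-- Cauchy–Schwarz for a positive semidefinite symmetric operator. -/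
lemma cs_H (H : E →L[ℝ] E) (hHsym : ∀ z w, ⟪H z, w⟫ = ⟪z, H w⟫)
    (hHnn : ∀ z, 0 ≤ ⟪z, H z⟫) (u v : E) :
    ⟪u, H v⟫ ^ 2 ≤ ⟪u, H u⟫ * ⟪v, H v⟫ := by
  set B := ⟪u, H v⟫
  rcases le_or_gt ⟪v, H v⟫ 0 with hv | hv
  · have hv0 : ⟪v, H v⟫ = 0 := le_antisymm hv (hHnn v)
    have key : ∀ t : ℝ, 0 ≤ ⟪u, H u⟫ + 2 * t * B := by
      intro t
      have h := hHnn (u + t • v)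
      rw [expand_H H hHsym u v t, hv0] at h
      linarith [h]
    have hB : B = 0 := by
      by_contra hne
      have := key ((-⟪u, H u⟫ - 1) / (2 * B))
      have heq : 2 * ((-⟪u, H u⟫ - 1) / (2 * B)) * B = -⟪u, H u⟫ - 1 := by
        field_simp
      linarith [this, heq.symm ▸ this]
    rw [hB, hv0]; nlinarith [hHnn u]
  · have h := hHnn (u + (-(B / ⟪v, H v⟫)) • v)
    rw [expand_H H hHsym u v _] at h
    have hs : (B / ⟪v, H v⟫) * ⟪v, H v⟫ = B := div_mul_cancel₀ B (ne_of_gt hv)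
    nlinarith [h, hs, hv]

/-- Strong minimality: minimizer of linear + quadratic + convex gains `½‖·‖²_H`. -/
lemma strong_min (p : E → ℝ) (hp : ConvexOn ℝ Set.univ p)
    (g xk xk1 : E) (H : E →L[ℝ] E)
    (hHsym : ∀ z w, ⟪H z, w⟫ = ⟪z, H w⟫) (hHnn : ∀ z, 0 ≤ ⟪z, H z⟫)
    (hmin : ∀ x, ⟪g, xk1 - xk⟫ + (1/2) * ⟪xk1 - xk, H (xk1 - xk)⟫ + p xk1 ≤
      ⟪g, x - xk⟫ + (1/2) * ⟪x - xk, H (x - xk)⟫ + p x)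
    (x : E) :
    ⟪g, xk1 - xk⟫ + (1/2) * ⟪xk1 - xk, H (xk1 - xk)⟫ + p xk1
      + (1/2) * ⟪x - xk1, H (x - xk1)⟫ ≤
      ⟪g, x - xk⟫ + (1/2) * ⟪x - xk, H (x - xk)⟫ + p x := by
  set Qb := ⟪x - xk1, H (x - xk1)⟫ with hQbdef
  have hQb : 0 ≤ Qb := hHnn _
  set C := ⟪g, x - xk1⟫ + ⟪xk1 - xk, H (x - xk1)⟫ + p x - p xk1 with hCdef
  have hC : 0 ≤ C := by
    by_contra hCneg
    push_neg at hCneg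
    set t := min 1 (-C / (Qb + 1)) with htdef
    have ht0 : 0 < t := lt_min one_pos (div_pos (neg_pos.2 hCneg) (by linarith))
    have ht1 : t ≤ 1 := min_le_left _ _
    have hm := hmin (xk1 + t • (x - xk1))
    have e1 : xk1 + t • (x - xk1) - xk = (xk1 - xk) + t • (x - xk1) := by
      rw [add_sub_right_comm]
    have e2 : xk1 + t • (x - xk1) = (1 - t) • xk1 + t • x := by
      rw [smul_sub, sub_smul, one_smul]; abel
    have hpc : p ((1 - t) • xk1 + t • x) ≤ (1 - t) * p xk1 + t * p x := by
      simpa using hp.2 (Set.mem_univ xk1) (Set.mem_univ x) (by linarith : (0:ℝ) ≤ 1 - t)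
        ht0.le (by ring)
    rw [e1, inner_add_right, real_inner_smul_right,
      expand_H H hHsym (xk1 - xk) (x - xk1) t] at hm
    rw [e2] at hm
    have h0 : 0 ≤ t * (C + t / 2 * Qb) := by nlinarith [hm, hpc]
    have h1 : 0 ≤ C + t / 2 * Qb := by
      by_contra hX
      push_neg at hX
      nlinarith [mul_neg_of_pos_of_neg ht0 hX]
    have ht2 : t * (Qb + 1) ≤ -C := (le_div_iff₀ (by linarith)).mp (min_le_right _ _)
    nlinarith [ht0, hQb]
  have e3 : x - xk = (xk1 - xk) + (1:ℝ) • (x - xk1) := by rw [one_smul]; abel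
  calc ⟪g, xk1 - xk⟫ + (1/2) * ⟪xk1 - xk, H (xk1 - xk)⟫ + p xk1
        + (1/2) * ⟪x - xk1, H (x - xk1)⟫
      ≤ ⟪g, (xk1 - xk) + (1:ℝ) • (x - xk1)⟫
        + (1/2) * ⟪(xk1 - xk) + (1:ℝ) • (x - xk1), H ((xk1 - xk) + (1:ℝ) • (x - xk1))⟫
        + p x := by
        rw [inner_add_right, real_inner_smul_right, expand_H H hHsym]
        simp only [hCdef, hQbdef] at hC
        nlinarith [hC]
    _ = _ := by rw [← e3]


set_option maxHeartbeats 1000000 in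
/-- Per-iteration progress bound: under the descent lemma hypotheses, with
`‖xᵏ−x*‖, ‖x^{k+1}−x*‖ ≤ δ` and `‖z‖_H ≤ σ‖z‖`, one has
`F(xᵏ) − F(x^{k+1}) ≥ (F(x^{k+1}) − F(x*))²/(2σ²δ²)`. -/
theorem imro_progress_bound {n : ℕ}
    (f p : EuclideanSpace ℝ (Fin n) → ℝ) (f' : EuclideanSpace ℝ (Fin n) → EuclideanSpace ℝ (Fin n))
    (hf : ConvexOn ℝ Set.univ f) (hf' : ∀ x, HasGradientAt f (f' x) x)
    (hp : ConvexOn ℝ Set.univ p)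
    (H : EuclideanSpace ℝ (Fin n) →L[ℝ] EuclideanSpace ℝ (Fin n))
    (hHsym : ∀ z w, ⟪H z, w⟫ = ⟪z, H w⟫)
    (hHpos : ∀ z, z ≠ 0 → 0 < ⟪z, H z⟫)
    (σ δ : ℝ) (hσ : 0 < σ) (hδ : 0 < δ)
    (hHle : ∀ z, ⟪z, H z⟫ ≤ σ^2 * ‖z‖^2)
    (xk xk1 xs : EuclideanSpace ℝ (Fin n)) :
    let F : EuclideanSpace ℝ (Fin n) → ℝ := fun x => f x + p x
    let M : EuclideanSpace ℝ (Fin n) → ℝ := fun x =>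
      f xk + ⟪f' xk, x - xk⟫ + (1/2) * ⟪x - xk, H (x - xk)⟫ + p x
    (∀ x, M xk1 ≤ M x) → F xk1 ≤ M xk1 →
    (∀ x, F xs ≤ F x) →
    ‖xk - xs‖ ≤ δ → ‖xk1 - xs‖ ≤ δ →
    F xk - F xk1 ≥ (F xk1 - F xs)^2 / (2 * σ^2 * δ^2) := by
  intro F M hmin hFM hFs hd1 hd2
  simp only [F, M] at hmin hFM hFs ⊢
  clear_value F M
  clear F M
  have hHnn : ∀ z, 0 ≤ ⟪z, H z⟫ := by
    intro z
    rcases eq_or_ne z 0 with h | h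
    · simp [h]
    · exact (hHpos z h).le
  have hmin' : ∀ x, ⟪f' xk, xk1 - xk⟫ + (1/2) * ⟪xk1 - xk, H (xk1 - xk)⟫ + p xk1 ≤
      ⟪f' xk, x - xk⟫ + (1/2) * ⟪x - xk, H (x - xk)⟫ + p x := by
    intro x
    linarith [hmin x]
  have key := strong_min p hp (f' xk) xk xk1 H hHsym hHnn hmin'
  -- abbreviations
  have hQa : ⟪xk - xk1, H (xk - xk1)⟫ = ⟪xk1 - xk, H (xk1 - xk)⟫ := by
    have h : xk - xk1 = -(xk1 - xk) := by abel
    rw [h, map_neg, inner_neg_neg]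
  set Qa := ⟪xk1 - xk, H (xk1 - xk)⟫ with hQadef
  set Qv := ⟪xs - xk1, H (xs - xk1)⟫ with hQvdef
  set Qu := ⟪xs - xk, H (xs - xk)⟫ with hQudef
  set B := ⟪xs - xk, H (xk1 - xk)⟫ with hBdef
  have hQa0 : 0 ≤ Qa := hHnn _
  have hQu0 : 0 ≤ Qu := hHnn _
  -- (1) with x = xk
  have h1 : (1/2) * Qa ≤ (f xk + p xk) - (f xk1 + p xk1) := by
    have hk := key xk
    simp only [sub_self, inner_zero_right, inner_zero_left, map_zero] at hk
    rw [hQa] at hk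
    linarith [hk, hFM]
  -- (2) with x = xs
  have h2 : (f xk1 + p xk1) + (1/2) * Qv ≤ (f xs + p xs) + (1/2) * Qu := by
    have hk := key xs
    have hgrad := convex_grad_ineq f (f' xk) xk xs hf (hf' xk)
    linarith [hk, hFM, hgrad]
  -- expansion: Qu = Qv + 2⟪v, H a⟫ + Qa, and ⟪v, Ha⟫ = B - Qa
  have e4 : xs - xk = (xs - xk1) + (1:ℝ) • (xk1 - xk) := by rw [one_smul]; abel
  have hexp : Qu = Qv + 2 * ⟪xs - xk1, H (xk1 - xk)⟫ + Qa := by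
    rw [hQudef, e4, expand_H H hHsym]; ring
  have hvu : ⟪xs - xk1, H (xk1 - xk)⟫ = B - Qa := by
    have h : xs - xk1 = (xs - xk) - (xk1 - xk) := by abel
    rw [hBdef, hQadef, h, inner_sub_left]
  have hA : 0 ≤ (f xk1 + p xk1) - (f xs + p xs) := by linarith [hFs xk1]
  have hAle : (f xk1 + p xk1) - (f xs + p xs) ≤ B := by
    rw [hvu] at hexp
    linarith [h2, hexp, hQa0]
  have hcs : B^2 ≤ Qu * Qa := cs_H H hHsym hHnn (xs - xk) (xk1 - xk)
  have hQuδ : Qu ≤ σ^2 * δ^2 := by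
    have h := hHle (xs - xk)
    have hn : ‖xs - xk‖ ≤ δ := by rwa [norm_sub_rev]
    rw [hQudef]
    have hn2 : ‖xs - xk‖^2 ≤ δ^2 := by nlinarith [hn, norm_nonneg (xs - xk)]
    have := mul_le_mul_of_nonneg_left hn2 (sq_nonneg σ)
    linarith
  have hsq : ((f xk1 + p xk1) - (f xs + p xs))^2 ≤ σ^2 * δ^2 * Qa := by
    nlinarith [hA, hAle, hcs, hQuδ, hQa0]
  rw [ge_iff_le, div_le_iff₀ (by positivity)]
  nlinarith [hsq, h1]
end

section
/- Let (ωᵏ)_{k≥1} be a decreasing sequence converging to ω* with ωᵏ − ω^{k+1} ≥ (ω^{k+1} − ω*)²/μ for all k (μ > 0), and ω¹ − ω* ≤ 4μ. Then ωᵏ − ω* ≤ 4μ/k for all k ≥ 1. -/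
open Filter

/-- Sublinear-rate lemma: if `(ωᵏ)` is decreasing with limit `ω*`,
`ωᵏ − ω^{k+1} ≥ (ω^{k+1} − ω*)²/μ` for all `k ≥ 1`, and `ω¹ − ω* ≤ 4μ`, then
`ωᵏ − ω* ≤ 4μ/k` for all `k ≥ 1`. -/
theorem sublinear_rate (ω : ℕ → ℝ) (ωs μ : ℝ) (hμ : 0 < μ)
    (hmono : Antitone ω)
    (hlim : Tendsto ω atTop (nhds ωs))
    (hrec : ∀ k : ℕ, 1 ≤ k → ω k - ω (k+1) ≥ (ω (k+1) - ωs)^2 / μ)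
    (h1 : ω 1 - ωs ≤ 4 * μ) :
    ∀ k : ℕ, 1 ≤ k → ω k - ωs ≤ 4 * μ / k := by
  have hge : ∀ n, ωs ≤ ω n := fun n =>
    le_of_tendsto hlim (Filter.eventually_atTop.2 ⟨n, fun m hm => hmono hm⟩)
  intro k hk
  induction k with
  | zero => omega
  | succ n ih =>
    rcases Nat.lt_or_ge n 1 with h | h
    · interval_cases n
      simpa using h1
    · have ihn := ih h
      have hrecn := hrec n h
      have ha : 0 ≤ ω (n+1) - ωs := sub_nonneg.2 (hge (n+1))
      have hn1 : (1:ℝ) ≤ (n:ℝ) := by exact_mod_cast h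
      have hn0 : (0:ℝ) < (n:ℝ) := by linarith
      have hn2 : (0:ℝ) < (n:ℝ) + 1 := by linarith
      set a := ω (n+1) - ωs with hadef
      have hchain : a + a^2 / μ ≤ 4 * μ / n := by
        have := div_nonneg (sq_nonneg a) hμ.le
        linarith [hrecn, ihn]
      by_contra hcon
      push_neg at hcon
      have hcon' : 4 * μ / ((n:ℝ)+1) < a := by
        push_cast at hcon; linarith
      have hμne : μ ≠ 0 := hμ.ne'
      have h1' : a * ↑n * μ + a^2 * ↑n ≤ 4 * μ * μ := by
        have h'' : (a + a^2/μ) * ↑n ≤ 4 * μ := (le_div_iff₀ hn0).1 hchain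
        calc a * ↑n * μ + a^2 * ↑n = (a + a^2/μ) * ↑n * μ := by
              field_simp
          _ ≤ 4 * μ * μ := mul_le_mul_of_nonneg_right h'' hμ.le
      have h2' : 4 * μ < a * ((n:ℝ)+1) := (div_lt_iff₀ hn2).1 hcon'
      have hp : 0 < a * ((n:ℝ)+1) - 4*μ := by linarith
      nlinarith [mul_pos hp hμ, mul_pos hp hn0, mul_pos (mul_pos hp hn0) hp,
        mul_pos (mul_pos hp hμ) hn0, sq_nonneg (a*((n:ℝ)+1) - 4*μ)]
end

section
/- Let λ⁰ = 1 and λ^{k+1} = (1−αᵏ)λᵏ where αᵏ ∈ (0,1) satisfies σ(αᵏ)² = (1−αᵏ)γᵏ with γ^{k+1} = σ(αᵏ)² and γ⁰ ≥ L > 0, σ > 0. Then λᵏ ≤ 4σ/(2√σ + k√γ⁰)² for all k ≥ 0. -/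
/-- Nesterov rate: with `λ⁰ = 1`, `λ^{k+1} = (1−αᵏ)λᵏ`, `αᵏ ∈ (0,1)`,
`σ(αᵏ)² = (1−αᵏ)γᵏ`, `γ^{k+1} = σ(αᵏ)²`, and `γ⁰ ≥ L > 0`, `σ > 0`, one has
`λᵏ ≤ 4σ/(2√σ + k√γ⁰)²` for all `k`. -/
theorem nesterov_lambda_rate (σ L : ℝ) (hσ : 0 < σ) (hL : 0 < L)
    (α γ lam : ℕ → ℝ)
    (hlam0 : lam 0 = 1)
    (hlam : ∀ k, lam (k+1) = (1 - α k) * lam k)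
    (hα : ∀ k, α k ∈ Set.Ioo (0:ℝ) 1)
    (hαγ : ∀ k, σ * (α k)^2 = (1 - α k) * γ k)
    (hγ : ∀ k, γ (k+1) = σ * (α k)^2)
    (hγ0 : γ 0 ≥ L) :
    ∀ k : ℕ, lam k ≤ 4 * σ / (2 * Real.sqrt σ + k * Real.sqrt (γ 0))^2 := by
  have hγ0pos : 0 < γ 0 := lt_of_lt_of_le hL hγ0
  have hlampos : ∀ k, 0 < lam k := by
    intro k; induction k with
    | zero => simp [hlam0]
    | succ n ih => rw [hlam]; exact mul_pos (by linarith [(hα n).2]) ih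
  have hγeq : ∀ k, γ k = γ 0 * lam k := by
    intro k; induction k with
    | zero => simp [hlam0]
    | succ n ih => rw [hγ, hαγ, ih, hlam]; ring
  have key : ∀ k : ℕ, Real.sqrt (lam k) * (2 * Real.sqrt σ + k * Real.sqrt (γ 0))
      ≤ 2 * Real.sqrt σ := by
    intro k; induction k with
    | zero => simp [hlam0]
    | succ n ih =>
      have hαn := hα n
      have hα0 := hαn.1
      have hα1 := hαn.2
      have hhalf : (0:ℝ) ≤ 1 - α n / 2 := by linarith
      have h1 : Real.sqrt (lam (n+1)) ≤ (1 - α n / 2) * Real.sqrt (lam n) := by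
        rw [hlam]
        have hsq : (1 - α n) * lam n ≤ ((1 - α n / 2) * Real.sqrt (lam n))^2 := by
          rw [mul_pow, Real.sq_sqrt (hlampos n).le]
          nlinarith [sq_nonneg (α n), (hlampos n).le, hlampos n]
        calc Real.sqrt ((1 - α n) * lam n)
            ≤ Real.sqrt (((1 - α n / 2) * Real.sqrt (lam n))^2) := Real.sqrt_le_sqrt hsq
          _ = (1 - α n / 2) * Real.sqrt (lam n) := by
              rw [Real.sqrt_sq (mul_nonneg hhalf (Real.sqrt_nonneg _))]
      have h2 : Real.sqrt (lam (n+1)) * Real.sqrt (γ 0) = α n * Real.sqrt σ := by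
        rw [← Real.sqrt_mul (hlampos (n+1)).le]
        have : lam (n+1) * γ 0 = σ * (α n)^2 := by
          have h := hγ n; rw [hγeq (n+1)] at h; rw [mul_comm]; linarith
        rw [this, Real.sqrt_mul hσ.le, Real.sqrt_sq hα0.le]; ring
      have hDn : (0:ℝ) ≤ 2 * Real.sqrt σ + n * Real.sqrt (γ 0) := by
        have := Real.sqrt_nonneg σ
        have : (0:ℝ) ≤ (n:ℝ) * Real.sqrt (γ 0) := by positivity
        linarith [Real.sqrt_nonneg σ]
      have hstep : Real.sqrt (lam (n+1)) * (2 * Real.sqrt σ + n * Real.sqrt (γ 0))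
          ≤ (1 - α n / 2) * (2 * Real.sqrt σ) := by
        calc Real.sqrt (lam (n+1)) * (2 * Real.sqrt σ + n * Real.sqrt (γ 0))
            ≤ ((1 - α n / 2) * Real.sqrt (lam n)) * (2 * Real.sqrt σ + n * Real.sqrt (γ 0)) :=
              mul_le_mul_of_nonneg_right h1 hDn
          _ = (1 - α n / 2) * (Real.sqrt (lam n) * (2 * Real.sqrt σ + n * Real.sqrt (γ 0))) := by
              ring
          _ ≤ (1 - α n / 2) * (2 * Real.sqrt σ) := mul_le_mul_of_nonneg_left ih hhalf
      have hcast : ((n+1 : ℕ) : ℝ) = (n:ℝ) + 1 := by push_cast; ring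
      rw [hcast]
      have expand : Real.sqrt (lam (n+1)) * (2 * Real.sqrt σ + ((n:ℝ) + 1) * Real.sqrt (γ 0))
          = Real.sqrt (lam (n+1)) * (2 * Real.sqrt σ + n * Real.sqrt (γ 0))
            + Real.sqrt (lam (n+1)) * Real.sqrt (γ 0) := by ring
      rw [expand, h2]
      nlinarith [hstep, Real.sqrt_nonneg σ]
  intro k
  have hsσ := Real.sqrt_pos.mpr hσ
  have hkn : (0:ℝ) ≤ (k:ℝ) * Real.sqrt (γ 0) := by positivity
  have hD : 0 < 2 * Real.sqrt σ + k * Real.sqrt (γ 0) := by linarith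
  rw [le_div_iff₀ (by positivity)]
  nlinarith [key k, Real.sq_sqrt (hlampos k).le, Real.sqrt_nonneg (lam k),
    Real.sq_sqrt hσ.le, hD, mul_nonneg (Real.sqrt_nonneg (lam k)) hD.le]
end

section
/- For σ > ‖u‖², the function μ ↦ uᵀ(x^c − (λ/σ)ξ(μ)) + (‖u‖² − σ)μ, where for each i, ξᵢ(μ) = sgn(xᵢ(μ)) if xᵢ(μ) ≠ 0 and ξᵢ(μ) = σ(xᵢᶜ + uᵢμ)/λ if xᵢ(μ) = 0, and x(μ) = S_{λ/σ}(x^c + μu) is the componentwise soft-threshold, is a continuous, piecewise linear, nonincreasing function of μ with slope at most ‖u‖² − σ < 0 on each piece; consequently the equation uᵀx(μ) − μσ = uᵀx^c has a solution μ*, and x(μ*) is the unique minimizer of x ↦ (1/2)‖x−x^c‖²_{σI−uuᵀ} + λ‖x‖₁. -/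
open Matrix

private lemma soft_eq (t a : ℝ) (ht : 0 < t) :
    Real.sign a * max (|a| - t) 0 = max (a - t) 0 - max (-a - t) 0 := by
  rcases lt_trichotomy a 0 with h | h | h
  · rw [Real.sign_of_neg h, abs_of_neg h, max_eq_right (show a - t ≤ 0 by linarith)]
    ring
  · subst h; simp [max_eq_right ht.le]
  · rw [Real.sign_of_pos h, abs_of_pos h, max_eq_right (show -a - t ≤ 0 by linarith)]
    ring

private lemma soft_lip {t : ℝ} (ht : 0 ≤ t) {a b : ℝ} (hab : a ≤ b) :
    0 ≤ (max (b - t) 0 - max (-b - t) 0) - (max (a - t) 0 - max (-a - t) 0) ∧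
    (max (b - t) 0 - max (-b - t) 0) - (max (a - t) 0 - max (-a - t) 0) ≤ b - a := by
  constructor <;> · simp only [max_def]; split_ifs <;> linarith

private lemma hmv {n : ℕ} (u : Fin n → ℝ) (σ : ℝ) (w : Fin n → ℝ) :
    ((σ • (1 : Matrix (Fin n) (Fin n) ℝ) - vecMulVec u u).mulVec w)
      = fun i => σ * w i - (u ⬝ᵥ w) * u i := by
  funext i
  simp only [Matrix.mulVec, dotProduct, Matrix.sub_apply, Matrix.smul_apply, Matrix.one_apply,
    vecMulVec_apply, sub_mul, Finset.sum_sub_distrib, smul_eq_mul, mul_ite, mul_one, mul_zero,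
    ite_mul, zero_mul, Finset.sum_ite_eq, Finset.mem_univ, if_true]
  rw [Finset.sum_mul]
  congr 1
  exact Finset.sum_congr rfl fun j _ => by ring

private lemma hquad {n : ℕ} (u : Fin n → ℝ) (σ : ℝ) (w : Fin n → ℝ) :
    w ⬝ᵥ ((σ • (1 : Matrix (Fin n) (Fin n) ℝ) - vecMulVec u u).mulVec w)
      = σ * (w ⬝ᵥ w) - (u ⬝ᵥ w)^2 := by
  rw [hmv]
  simp only [dotProduct, mul_sub, Finset.sum_sub_distrib, Finset.mul_sum]
  have h1 : ∑ x, w x * (σ * w x) = ∑ x, σ * (w x * w x) :=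
    Finset.sum_congr rfl fun _ _ => by ring
  have h2 : ∑ x, w x * ((∑ i, u i * w i) * u x) = (∑ i, u i * w i) * ∑ x, u x * w x := by
    rw [Finset.mul_sum]; exact Finset.sum_congr rfl fun _ _ => by ring
  rw [h1, h2]; ring

/-- The breakpoint-search function of IMRO: for `σ > ‖u‖²` and `λ > 0`, with
`x(μ) = S_{λ/σ}(x^c + μu)` the componentwise soft-threshold and `ξ(μ)` the
associated subgradient, the function
`μ ↦ uᵀ(x^c − (λ/σ)ξ(μ)) + (‖u‖² − σ)μ` (which equals `uᵀx(μ) − σμ`) is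
continuous and nonincreasing with slope at most `‖u‖² − σ < 0` between any two
points; consequently the equation `uᵀx(μ) − μσ = uᵀx^c` has a solution `μ*`,
and `x(μ*)` is the unique minimizer of `x ↦ (1/2)‖x−x^c‖²_{σI−uuᵀ} + λ‖x‖₁`. -/
theorem imro_mu_search {n : ℕ} (xc u : Fin n → ℝ) (lam σ : ℝ)
    (hlam : 0 < lam) (hσ : u ⬝ᵥ u < σ) :
    let xμ : ℝ → Fin n → ℝ := fun μ i =>
      Real.sign (xc i + μ * u i) * max (|xc i + μ * u i| - lam/σ) 0
    let ξ : ℝ → Fin n → ℝ := fun μ i =>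
      if xμ μ i ≠ 0 then Real.sign (xμ μ i) else σ * (xc i + u i * μ) / lam
    let φ : ℝ → ℝ := fun μ =>
      u ⬝ᵥ (fun i => xc i - (lam/σ) * ξ μ i) + (u ⬝ᵥ u - σ) * μ
    let G : (Fin n → ℝ) → ℝ := fun x =>
      (1/2) * ((x - xc) ⬝ᵥ ((σ • (1 : Matrix (Fin n) (Fin n) ℝ)
        - vecMulVec u u).mulVec (x - xc))) + lam * ∑ i, |x i|
    (∀ μ, φ μ = u ⬝ᵥ xμ μ - σ * μ) ∧
    Continuous φ ∧
    (∀ μ₁ μ₂ : ℝ, μ₁ ≤ μ₂ → φ μ₂ - φ μ₁ ≤ (u ⬝ᵥ u - σ) * (μ₂ - μ₁)) ∧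
    ∃ μs : ℝ, u ⬝ᵥ xμ μs - μs * σ = u ⬝ᵥ xc ∧
      (∀ x, G (xμ μs) ≤ G x) ∧ (∀ x, G x ≤ G (xμ μs) → x = xμ μs) := by
  intro xμ ξ φ G
  have hu2 : 0 ≤ u ⬝ᵥ u := Finset.sum_nonneg fun i _ => mul_self_nonneg (u i)
  have hσ0 : 0 < σ := lt_of_le_of_lt hu2 hσ
  have ht : 0 < lam / σ := div_pos hlam hσ0
  -- small-|a| characterization of xμ = 0
  have hzero : ∀ μ i, xμ μ i = 0 → |xc i + μ * u i| ≤ lam / σ := by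
    intro μ i h0
    by_contra h'
    push_neg at h'
    rcases lt_trichotomy (xc i + μ * u i) 0 with hc | hc | hc
    · rw [show xμ μ i = Real.sign (xc i + μ * u i) *
        max (|xc i + μ * u i| - lam/σ) 0 from rfl, Real.sign_of_neg hc,
        max_eq_left (by linarith : (0:ℝ) ≤ |xc i + μ * u i| - lam/σ)] at h0
      nlinarith
    · rw [hc, abs_zero] at h'; linarith
    · rw [show xμ μ i = Real.sign (xc i + μ * u i) *
        max (|xc i + μ * u i| - lam/σ) 0 from rfl, Real.sign_of_pos hc,
        max_eq_left (by linarith : (0:ℝ) ≤ |xc i + μ * u i| - lam/σ)] at h0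
      nlinarith
  -- key identity : xμ = a - t ξ
  have key : ∀ μ i, xμ μ i = (xc i + μ * u i) - (lam/σ) * ξ μ i := by
    intro μ i
    show xμ μ i = (xc i + μ * u i) -
      (lam/σ) * (if xμ μ i ≠ 0 then Real.sign (xμ μ i) else σ * (xc i + u i * μ) / lam)
    split_ifs with h
    · have hmax : lam / σ < |xc i + μ * u i| := by
        by_contra h'
        push_neg at h'
        exact h (by
          rw [show xμ μ i = Real.sign (xc i + μ * u i) *
            max (|xc i + μ * u i| - lam/σ) 0 from rfl,
            max_eq_right (by linarith : |xc i + μ * u i| - lam/σ ≤ 0), mul_zero])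
      set a := xc i + μ * u i with ha
      have hxe : xμ μ i = Real.sign a * (|a| - lam/σ) := by
        rw [show xμ μ i = Real.sign a * max (|a| - lam/σ) 0 from rfl,
          max_eq_left (by linarith : (0:ℝ) ≤ |a| - lam/σ)]
      rcases lt_trichotomy a 0 with hc | hc | hc
      · have hs : xμ μ i < 0 := by
          rw [hxe, Real.sign_of_neg hc]; rw [abs_of_neg hc] at hmax ⊢; nlinarith
        rw [Real.sign_of_neg hs, hxe, Real.sign_of_neg hc, abs_of_neg hc]; ring
      · exfalso; rw [hc, abs_zero] at hmax; linarith
      · have hs : 0 < xμ μ i := by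
          rw [hxe, Real.sign_of_pos hc]; rw [abs_of_pos hc] at hmax ⊢; nlinarith
        rw [Real.sign_of_pos hs, hxe, Real.sign_of_pos hc, abs_of_pos hc]; ring
    · push_neg at h
      rw [h]
      field_simp
      ring
  -- max-form of xμ
  have hform : ∀ μ i, xμ μ i
      = max (xc i + μ * u i - lam/σ) 0 - max (-(xc i + μ * u i) - lam/σ) 0 := by
    intro μ i
    exact soft_eq (lam/σ) (xc i + μ * u i) ht
  -- Part 1
  have part1 : ∀ μ, φ μ = u ⬝ᵥ xμ μ - σ * μ := by
    intro μ
    have e : ∀ i, u i * xμ μ i = u i * (xc i - lam/σ * ξ μ i) + u i * u i * μ := by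
      intro i; rw [key μ i]; ring
    have e2 : ∑ i, u i * xμ μ i
        = (∑ i, u i * (xc i - lam/σ * ξ μ i)) + (∑ i, u i * u i) * μ := by
      calc ∑ i, u i * xμ μ i
          = ∑ i, (u i * (xc i - lam/σ * ξ μ i) + u i * u i * μ) :=
            Finset.sum_congr rfl fun i _ => e i
        _ = (∑ i, u i * (xc i - lam/σ * ξ μ i)) + ∑ i, u i * u i * μ :=
            Finset.sum_add_distrib
        _ = (∑ i, u i * (xc i - lam/σ * ξ μ i)) + (∑ i, u i * u i) * μ := by
            rw [← Finset.sum_mul]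
    show (∑ i, u i * (xc i - lam/σ * ξ μ i)) + ((∑ i, u i * u i) - σ) * μ
      = (∑ i, u i * xμ μ i) - σ * μ
    rw [e2]; ring
  -- Continuity
  have cont : Continuous φ := by
    have hφ' : φ = fun μ => u ⬝ᵥ xμ μ - σ * μ := funext part1
    rw [hφ']
    have hxci : ∀ i, Continuous fun μ => xμ μ i := by
      intro i
      have hfi : (fun μ => xμ μ i)
          = fun μ => max (xc i + μ * u i - lam/σ) 0
              - max (-(xc i + μ * u i) - lam/σ) 0 := funext fun μ => hform μ i
      rw [hfi]; fun_prop
    have h1 : Continuous fun μ => u ⬝ᵥ xμ μ := by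
      show Continuous fun μ => ∑ i, u i * xμ μ i
      exact continuous_finset_sum _ fun i _ => continuous_const.mul (hxci i)
    exact h1.sub (continuous_const.mul continuous_id)
  -- Monotonicity
  have mono : ∀ μ₁ μ₂ : ℝ, μ₁ ≤ μ₂ → φ μ₂ - φ μ₁ ≤ (u ⬝ᵥ u - σ) * (μ₂ - μ₁) := by
    intro μ₁ μ₂ hμ
    rw [part1 μ₁, part1 μ₂]
    have hsum : u ⬝ᵥ xμ μ₂ - u ⬝ᵥ xμ μ₁ ≤ u ⬝ᵥ u * (μ₂ - μ₁) := by
      show (∑ i, u i * xμ μ₂ i) - (∑ i, u i * xμ μ₁ i)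
        ≤ (∑ i, u i * u i) * (μ₂ - μ₁)
      rw [← Finset.sum_sub_distrib, Finset.sum_mul]
      apply Finset.sum_le_sum
      intro i _
      rw [hform μ₂ i, hform μ₁ i]
      rcases le_total 0 (u i) with hui | hui
      · have hab : xc i + μ₁ * u i ≤ xc i + μ₂ * u i := by nlinarith
        obtain ⟨h0, h1⟩ := soft_lip ht.le hab
        nlinarith
      · have hab : xc i + μ₂ * u i ≤ xc i + μ₁ * u i := by nlinarith
        obtain ⟨h0, h1⟩ := soft_lip ht.le hab
        nlinarith
    nlinarith [hsum]
  refine ⟨part1, cont, mono, ?_⟩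
  -- Existence of μs via IVT
  set M : ℝ := (|φ 0 - u ⬝ᵥ xc| + 1) / (σ - u ⬝ᵥ u) with hMdef
  have hdpos : (0:ℝ) < σ - u ⬝ᵥ u := by linarith
  have hM0 : 0 ≤ M := le_of_lt (div_pos (by positivity) hdpos)
  have hdM : M * (σ - u ⬝ᵥ u) = |φ 0 - u ⬝ᵥ xc| + 1 :=
    div_mul_cancel₀ _ (ne_of_gt hdpos)
  have hub : φ M ≤ u ⬝ᵥ xc - 1 := by
    have h1 := mono 0 M hM0
    have h2 := le_abs_self (φ 0 - u ⬝ᵥ xc)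
    nlinarith
  have hlb : u ⬝ᵥ xc + 1 ≤ φ (-M) := by
    have h1 := mono (-M) 0 (by linarith)
    have h2 := neg_abs_le (φ 0 - u ⬝ᵥ xc)
    nlinarith
  obtain ⟨μs, -, hμs⟩ := intermediate_value_Icc' (show -M ≤ M by linarith)
    cont.continuousOn
    (show u ⬝ᵥ xc ∈ Set.Icc (φ M) (φ (-M)) from ⟨by linarith, by linarith⟩)
  -- hμs : φ μs = u ⬝ᵥ xc
  have hueq : ∑ i, u i * (xμ μs i - xc i) = σ * μs := by
    have h1 := part1 μs
    rw [hμs] at h1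
    have h0 : (∑ i, u i * xμ μs i) - σ * μs = ∑ i, u i * xc i := h1.symm
    have h2 : ∑ i, u i * (xμ μs i - xc i)
        = (∑ i, u i * xμ μs i) - ∑ i, u i * xc i := by
      rw [← Finset.sum_sub_distrib]
      exact Finset.sum_congr rfl fun i _ => by ring
    linarith
  have hlin : ∀ i, σ * (xμ μs i - xc i - μs * u i) = -lam * ξ μs i := by
    intro i
    have h1 : xμ μs i - xc i - μs * u i = -(lam/σ) * ξ μs i := by
      rw [key μs i]; ring
    rw [h1]
    field_simp
  have subgrad : ∀ i (y : ℝ), ξ μs i * (y - xμ μs i) ≤ |y| - |xμ μs i| := by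
    intro i y
    show (if xμ μs i ≠ 0 then Real.sign (xμ μs i)
        else σ * (xc i + u i * μs) / lam) * (y - xμ μs i) ≤ |y| - |xμ μs i|
    split_ifs with h
    · rcases lt_trichotomy (xμ μs i) 0 with hc0 | hc0 | hc0
      · rw [Real.sign_of_neg hc0, abs_of_neg hc0]
        linarith [neg_abs_le y]
      · exact absurd hc0 h
      · rw [Real.sign_of_pos hc0, abs_of_pos hc0]
        linarith [le_abs_self y]
    · push_neg at h
      rw [h, abs_zero, sub_zero, sub_zero]
      have hb := hzero μs i h
      have hcomm : |xc i + u i * μs| = |xc i + μs * u i| := by rw [mul_comm]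
      have h1 : |σ * (xc i + u i * μs) / lam| ≤ 1 := by
        rw [abs_div, abs_mul, abs_of_pos hσ0, abs_of_pos hlam, div_le_one hlam, hcomm]
        calc σ * |xc i + μs * u i| ≤ σ * (lam/σ) := by nlinarith
          _ = lam := by field_simp
      calc σ * (xc i + u i * μs) / lam * y
          ≤ |σ * (xc i + u i * μs) / lam * y| := le_abs_self _
        _ = |σ * (xc i + u i * μs) / lam| * |y| := abs_mul _ _
        _ ≤ 1 * |y| := by nlinarith [abs_nonneg y]
        _ = |y| := one_mul _
  have hσ' : (∑ i, u i * u i) < σ := hσ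
  -- explicit quadratic form of G
  have hGx : ∀ y : Fin n → ℝ, G y
      = (1/2)*(σ * (∑ i, (y i - xc i) * (y i - xc i))
          - (∑ i, u i * (y i - xc i))^2) + lam * ∑ i, |y i| := by
    intro y
    show (1/2) * ((y - xc) ⬝ᵥ ((σ • (1 : Matrix (Fin n) (Fin n) ℝ)
        - vecMulVec u u).mulVec (y - xc))) + lam * ∑ i, |y i| = _
    rw [hquad u σ (y - xc)]
    rfl
  -- master inequality
  have master : ∀ x : Fin n → ℝ,
      G (xμ μs) + (1/2)*((σ - ∑ i, u i * u i)
        * (∑ i, (x i - xμ μs i) * (x i - xμ μs i))) ≤ G x := by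
    intro x
    have hA : ∑ i, (x i - xc i) * (x i - xc i)
        = (∑ i, (xμ μs i - xc i) * (xμ μs i - xc i))
          + 2 * (∑ i, (xμ μs i - xc i) * (x i - xμ μs i))
          + ∑ i, (x i - xμ μs i) * (x i - xμ μs i) := by
      rw [Finset.mul_sum, ← Finset.sum_add_distrib, ← Finset.sum_add_distrib]
      exact Finset.sum_congr rfl fun i _ => by ring
    have hB : ∑ i, u i * (x i - xc i)
        = (∑ i, u i * (xμ μs i - xc i)) + ∑ i, u i * (x i - xμ μs i) := by
      rw [← Finset.sum_add_distrib]
      exact Finset.sum_congr rfl fun i _ => by ring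
    have hD : σ * (∑ i, (xμ μs i - xc i) * (x i - xμ μs i))
        - (σ * μs) * (∑ i, u i * (x i - xμ μs i))
        = -lam * ∑ i, ξ μs i * (x i - xμ μs i) := by
      calc σ * (∑ i, (xμ μs i - xc i) * (x i - xμ μs i))
          - (σ * μs) * (∑ i, u i * (x i - xμ μs i))
          = ∑ i, (σ * (xμ μs i - xc i - μs * u i)) * (x i - xμ μs i) := by
            rw [Finset.mul_sum, Finset.mul_sum, ← Finset.sum_sub_distrib]
            exact Finset.sum_congr rfl fun i _ => by ring
        _ = ∑ i, (-lam * ξ μs i) * (x i - xμ μs i) :=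
            Finset.sum_congr rfl fun i _ => by rw [hlin i]
        _ = -lam * ∑ i, ξ μs i * (x i - xμ μs i) := by
            rw [Finset.mul_sum]
            exact Finset.sum_congr rfl fun i _ => by ring
    have hcs : (∑ i, u i * (x i - xμ μs i))^2
        ≤ (∑ i, u i * u i) * ∑ i, (x i - xμ μs i) * (x i - xμ μs i) := by
      have h := Finset.sum_mul_sq_le_sq_mul_sq Finset.univ u (fun i => x i - xμ μs i)
      have e1 : ∑ i, u i ^ 2 = ∑ i, u i * u i :=
        Finset.sum_congr rfl fun i _ => pow_two (u i)
      have e2 : ∑ i, (x i - xμ μs i) ^ 2 = ∑ i, (x i - xμ μs i) * (x i - xμ μs i) :=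
        Finset.sum_congr rfl fun i _ => pow_two _
      rw [e1, e2] at h
      exact h
    have hsub : ∑ i, ξ μs i * (x i - xμ μs i)
        ≤ (∑ i, |x i|) - ∑ i, |xμ μs i| := by
      rw [← Finset.sum_sub_distrib]
      exact Finset.sum_le_sum fun i _ => subgrad i (x i)
    have hGd : G x - G (xμ μs)
        = (1/2)*(σ * (∑ i, (x i - xμ μs i) * (x i - xμ μs i))
            - (∑ i, u i * (x i - xμ μs i))^2)
          + (σ * (∑ i, (xμ μs i - xc i) * (x i - xμ μs i))
            - (σ * μs) * (∑ i, u i * (x i - xμ μs i)))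
          + lam * ((∑ i, |x i|) - ∑ i, |xμ μs i|) := by
      rw [hGx x, hGx (xμ μs), hA, hB, hueq]
      ring
    have h1 : 0 ≤ lam * ((∑ i, |x i|) - (∑ i, |xμ μs i|)
        - ∑ i, ξ μs i * (x i - xμ μs i)) := mul_nonneg hlam.le (by linarith)
    linarith [hGd, hD, hcs, h1]
  have hVnn : ∀ x : Fin n → ℝ,
      0 ≤ ∑ i, (x i - xμ μs i) * (x i - xμ μs i) :=
    fun x => Finset.sum_nonneg fun i _ => mul_self_nonneg _
  refine ⟨μs, ?_, ?_, ?_⟩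
  · have h1 := part1 μs
    rw [hμs] at h1
    show (∑ i, u i * xμ μs i) - μs * σ = ∑ i, u i * xc i
    have h0 : (∑ i, u i * xμ μs i) - σ * μs = ∑ i, u i * xc i := h1.symm
    linarith
  · intro x
    have h2 : 0 ≤ (σ - ∑ i, u i * u i) * ∑ i, (x i - xμ μs i) * (x i - xμ μs i) :=
      mul_nonneg (by linarith) (hVnn x)
    have hm := master x
    refine le_trans (le_add_of_nonneg_right ?_) hm
    linarith only [h2]
  · intro x hx
    have hV0 : ∑ i, (x i - xμ μs i) * (x i - xμ μs i) = 0 := by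
      have hm := master x
      have h5 : G (xμ μs) + (1/2)*((σ - ∑ i, u i * u i)
          * (∑ i, (x i - xμ μs i) * (x i - xμ μs i))) ≤ G (xμ μs) + 0 := by
        rw [add_zero]; exact le_trans hm hx
      have h6' := (add_le_add_iff_left (G (xμ μs))).1 h5
      have h6 : (σ - ∑ i, u i * u i) * (∑ i, (x i - xμ μs i) * (x i - xμ μs i)) ≤ 0 := by
        linarith only [h6']
      have h7 : 0 ≤ (σ - ∑ i, u i * u i) * ∑ i, (x i - xμ μs i) * (x i - xμ μs i) :=
        mul_nonneg (by linarith only [hσ']) (hVnn x)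
      rcases mul_eq_zero.1 (le_antisymm h6 h7) with h9 | h9
      · exact absurd h9 (ne_of_gt (sub_pos.2 hσ'))
      · exact h9
    funext i
    have h3 := (Finset.sum_eq_zero_iff_of_nonneg
      (fun i _ => mul_self_nonneg (x i - xμ μs i))).1 hV0 i (Finset.mem_univ i)
    have h4 := mul_self_eq_zero.1 h3
    linarith
end
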